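/- arXiv:1602.04689 — 7 statements merged into one kernel-verified Lean document; each statement's English description precedes it below -/
import Mathlib

section
/- Let G be a finite p-group with |G : G'| = p^2 and suppose G' ≠ γ₃(G). Then γ₃(G) is the unique normal subgroup of G of index p^3. -/
/-!
If `N` is normal of index `p ^ 3`, the centre of the `p`-group `G ⧸ N` is nontrivial, so the
central quotient has order dividing `p ^ 2` and is abelian; thus `G ⧸ N` has class at most two
and `γ₃(G) ≤ N`. In `R = G ⧸ γ₃(G)` commutators are central and `R ⧸ R'` has order `p ^ 2`, so it
is generated by the images of some `a`, `b` with `a ^ p ∈ R'`. Then `R` is generated by `a`, `b`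
and its centre, so `R' = ⟨[a, b]⟩`, and `[a, b] ^ p = [a ^ p, b] = 1`. Hence `|G : γ₃(G)|`
divides `p ^ 3`, and comparing indices gives `N = γ₃(G)`.
-/

open Subgroup
open scoped commutatorElement

section

variable {G : Type*} [Group G] {p : ℕ}

theorem lowerCentralSeries_two_eq_bot_iff :
    (⊤ : Subgroup G).lowerCentralSeries 2 = ⊥ ↔ commutator G ≤ center G := by
  rw [← centralizer_univ, ← coe_top, ← commutator_eq_bot_iff_le_centralizer]
  rfl

theorem normal_of_le_center {H : Subgroup G} (hH : H ≤ center G) : H.Normal :=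
  ⟨fun n hn g => by rwa [mem_center_iff.mp (hH hn) g, mul_inv_cancel_right]⟩

theorem eq_of_le_of_index_dvd_index {H K : Subgroup G} (hHK : H ≤ K) (hK : K.index ≠ 0)
    (hdvd : H.index ∣ K.index) : H = K := by
  have hrel := relIndex_mul_index hHK
  rw [Nat.dvd_antisymm hdvd (index_dvd_of_le hHK), mul_eq_right₀ hK] at hrel
  exact le_antisymm hHK (relIndex_eq_one.mp hrel)

theorem commutator_le_of_closure_eq_top {N : Subgroup G} [N.Normal] {k : Set G}
    (hk : closure k = ⊤) (hkN : ∀ x ∈ k, ∀ y ∈ k, ⁅x, y⁆ ∈ N) : commutator G ≤ N := by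
  rw [← Normal.quotient_commutative_iff_commutator_le]
  have hcomm : IsMulCommutative (closure (QuotientGroup.mk' N '' k)) := by
    refine isMulCommutative_closure ?_
    rintro _ ⟨x, hx, rfl⟩ _ ⟨y, hy, rfl⟩
    rw [← commutatorElement_eq_one_iff_mul_comm, ← map_commutatorElement,
      QuotientGroup.mk'_apply, QuotientGroup.eq_one_iff]
    exact hkN x hx y hy
  have htop : closure (QuotientGroup.mk' N '' k) = ⊤ := by
    rw [← MonoidHom.map_closure, hk, map_top_of_surjective _ (QuotientGroup.mk'_surjective N)]
  refine ⟨⟨fun x y => ?_⟩⟩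
  exact congrArg Subtype.val (hcomm.is_comm.comm ⟨x, htop ▸ mem_top x⟩ ⟨y, htop ▸ mem_top y⟩)

theorem commutatorElement_pow_eq_one {a b : G} {n : ℕ} (hca : Commute ⁅a, b⁆ a)
    (hb : Commute (a ^ n) b) : ⁅a, b⁆ ^ n = 1 := by
  have hconj : b * a * b⁻¹ = ⁅a, b⁆⁻¹ * a := by
    rw [commutatorElement_def]
    group
  have h := conj_pow (a := b) (b := a) (i := n)
  rw [hconj, hca.inv_left.mul_pow, hb.symm.eq, mul_inv_cancel_right, mul_eq_right, inv_pow,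
    inv_eq_one] at h
  exact h

theorem exists_pow_eq_one_closure_pair_eq_top [Fact p.Prime] (hG : Nat.card G = p ^ 2) :
    ∃ a b : G, a ^ p = 1 ∧ closure {a, b} = ⊤ := by
  have hp : p.Prime := Fact.out
  have : Finite G := Nat.finite_of_card_ne_zero (hG ▸ pow_ne_zero 2 hp.ne_zero)
  obtain ⟨a, ha⟩ := exists_prime_orderOf_dvd_card' p (hG ▸ dvd_pow_self p two_ne_zero)
  have hindex : (zpowers a).index = p := by
    have h := (zpowers a).card_mul_index
    rw [Nat.card_zpowers, ha, hG, sq] at h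
    exact Nat.eq_of_mul_eq_mul_left hp.pos h
  obtain ⟨b, hb⟩ : ∃ b, b ∉ zpowers a := by
    by_contra! h
    rw [(eq_top_iff' _).mpr h, index_top] at hindex
    exact hp.ne_one hindex.symm
  refine ⟨a, b, ha ▸ pow_orderOf_eq_one a, ?_⟩
  have hle : zpowers a ≤ closure {a, b} := zpowers_le.mpr (subset_closure (by simp))
  rcases hp.eq_one_or_self_of_dvd _ (hindex ▸ index_dvd_of_le hle) with h | h
  · exact index_eq_one.mp h
  · refine absurd ?_ hb
    have hrel := relIndex_mul_index hle
    rw [h, hindex] at hrel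
    have : (zpowers a).relIndex (closure {a, b}) = 1 :=
      Nat.eq_of_mul_eq_mul_right hp.pos (by rw [hrel, one_mul])
    exact relIndex_eq_one.mp this (subset_closure (by simp))

theorem isMulCommutative_of_card_dvd_prime_sq [Fact p.Prime] (hG : Nat.card G ∣ p ^ 2) :
    IsMulCommutative G := by
  obtain ⟨k, hk, hcard⟩ := (Nat.dvd_prime_pow Fact.out).mp hG
  rcases hk.lt_or_eq with hk | rfl
  · have : IsCyclic G := isCyclic_of_card_dvd_prime (p := p)
      (hcard ▸ pow_dvd_pow p (Nat.lt_succ_iff.mp hk) |>.trans (pow_one p).dvd)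
    infer_instance
  · exact IsPGroup.isMulCommutative_of_card_eq_prime_sq hcard

theorem commutator_le_zpowers_commutatorElement (hc : commutator G ≤ center G) {a b : G}
    (hab : closure ({(a : G ⧸ commutator G), (b : G ⧸ commutator G)} : Set _) = ⊤) :
    commutator G ≤ zpowers ⁅a, b⁆ := by
  have hcZ : ⁅a, b⁆ ∈ center G := hc (commutator_mem_commutator (mem_top a) (mem_top b))
  have := normal_of_le_center (zpowers_le.mpr hcZ)
  set k : Set G := {a, b} ∪ center G
  have hk : closure k = ⊤ := by
    have hker : (QuotientGroup.mk' (commutator G)).ker ≤ closure k := by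
      rw [QuotientGroup.ker_mk']
      exact hc.trans (subset_closure.trans (closure_mono Set.subset_union_right))
    rw [← comap_map_eq_self hker, MonoidHom.map_closure, eq_top_iff,
      ← comap_top (QuotientGroup.mk' (commutator G)), ← hab]
    refine comap_mono (closure_mono ?_)
    rintro _ (rfl | rfl)
    exacts [⟨a, by simp [k], rfl⟩, ⟨b, by simp [k], rfl⟩]
  refine commutator_le_of_closure_eq_top hk ?_
  have hcen : ∀ x y : G, x ∈ center G ∨ y ∈ center G → ⁅x, y⁆ ∈ zpowers ⁅a, b⁆ := by
    rintro x y (hx | hy)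
    · rw [commutatorElement_eq_one_iff_commute.mpr (mem_center_iff.mp hx y).symm]
      exact one_mem _
    · rw [commutatorElement_eq_one_iff_commute.mpr (mem_center_iff.mp hy x)]
      exact one_mem _
  rintro _ ((rfl | rfl) | hx) _ ((rfl | rfl) | hy)
  all_goals first
    | exact hcen _ _ (Or.inl hx)
    | exact hcen _ _ (Or.inr hy)
    | (rw [commutatorElement_self]; exact one_mem _)
    | exact mem_zpowers _
    | (rw [← inv_mem_iff, commutatorElement_inv]; exact mem_zpowers _)

theorem card_commutator_dvd_of_le_center [Fact p.Prime] (hc : commutator G ≤ center G)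
    (hidx : (commutator G).index = p ^ 2) : Nat.card (commutator G) ∣ p := by
  obtain ⟨a', b', ha', hab'⟩ :=
    exists_pow_eq_one_closure_pair_eq_top (G := G ⧸ commutator G) (by rw [← index_eq_card, hidx])
  obtain ⟨a, rfl⟩ := QuotientGroup.mk_surjective a'
  obtain ⟨b, rfl⟩ := QuotientGroup.mk_surjective b'
  have hapow : a ^ p ∈ center G := hc (by rwa [← QuotientGroup.eq_one_iff, QuotientGroup.mk_pow])
  have hcZ : ⁅a, b⁆ ∈ center G := hc (commutator_mem_commutator (mem_top a) (mem_top b))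
  have hcp : ⁅a, b⁆ ^ p = 1 :=
    commutatorElement_pow_eq_one (mem_center_iff.mp hcZ a).symm (mem_center_iff.mp hapow b).symm
  calc Nat.card (commutator G) ∣ Nat.card (zpowers ⁅a, b⁆) :=
        card_dvd_of_le (commutator_le_zpowers_commutatorElement hc hab')
    _ = orderOf ⁅a, b⁆ := Nat.card_zpowers _
    _ ∣ p := orderOf_dvd_of_pow_eq_one hcp

theorem index_lowerCentralSeries_two_dvd [Fact p.Prime] (hidx : (commutator G).index = p ^ 2) :
    ((⊤ : Subgroup G).lowerCentralSeries 2).index ∣ p ^ 3 := by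
  set γ := (⊤ : Subgroup G).lowerCentralSeries 2
  have hsurj := QuotientGroup.mk'_surjective γ
  have hγ : γ ≤ commutator G := commutator_le_left _ _
  have hmap : (commutator G).map (QuotientGroup.mk' γ) = commutator (G ⧸ γ) := by
    rw [map_commutator_eq, MonoidHom.range_eq_top.mpr hsurj]
    rfl
  have hc : commutator (G ⧸ γ) ≤ center (G ⧸ γ) := by
    rw [← lowerCentralSeries_two_eq_bot_iff, ← map_top_of_surjective _ hsurj,
      ← map_lowerCentralSeries, Subgroup.map_eq_bot_iff, QuotientGroup.ker_mk']
  have hidx' : (commutator (G ⧸ γ)).index = p ^ 2 := by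
    rw [← hmap, index_map_eq _ hsurj (by rwa [QuotientGroup.ker_mk']), hidx]
  calc γ.index = Nat.card (commutator (G ⧸ γ)) * (commutator (G ⧸ γ)).index := by
        rw [card_mul_index, index_eq_card]
    _ ∣ p * p ^ 2 := mul_dvd_mul (card_commutator_dvd_of_le_center hc hidx') hidx'.dvd
    _ = p ^ 3 := by ring

theorem commutator_le_center_of_card_eq_prime_pow_three [Fact p.Prime]
    (hG : Nat.card G = p ^ 3) : commutator G ≤ center G := by
  obtain ⟨k, hk, hZ⟩ := IsPGroup.card_center_eq_prime_pow hG (by norm_num)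
  have hdvd : Nat.card (G ⧸ center G) ∣ p ^ 2 := by
    refine Nat.dvd_of_mul_dvd_mul_left (Fact.out : p.Prime).pos ?_
    calc p * Nat.card (G ⧸ center G) ∣ Nat.card (center G) * (center G).index := by
          rw [hZ, index_eq_card]
          exact mul_dvd_mul_right (dvd_pow_self p hk.ne') _
      _ = p * p ^ 2 := by rw [card_mul_index, hG]; ring
  exact Normal.quotient_commutative_iff_commutator_le.mp (isMulCommutative_of_card_dvd_prime_sq hdvd)

theorem lowerCentralSeries_two_le_of_index_eq [Fact p.Prime] {N : Subgroup G} [N.Normal]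
    (hN : N.index = p ^ 3) : (⊤ : Subgroup G).lowerCentralSeries 2 ≤ N := by
  rw [← QuotientGroup.ker_mk' N, ← Subgroup.map_eq_bot_iff, map_lowerCentralSeries,
    map_top_of_surjective _ (QuotientGroup.mk'_surjective N), lowerCentralSeries_two_eq_bot_iff]
  exact commutator_le_center_of_card_eq_prime_pow_three (by rw [← index_eq_card, hN])

end

theorem stmt2_general (p : ℕ) [Fact p.Prime] (G : Type*) [Group G]
    (hidx : (commutator G).index = p ^ 2) :
    ∀ N : Subgroup G, N.Normal → N.index = p ^ 3 → N = (⊤ : Subgroup G).lowerCentralSeries 2 := by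
  intro N hN hNidx
  refine (eq_of_le_of_index_dvd_index (lowerCentralSeries_two_le_of_index_eq hNidx) ?_ ?_).symm
  · rw [hNidx]
    exact pow_ne_zero 3 (Fact.out : p.Prime).ne_zero
  · rw [hNidx]
    exact index_lowerCentralSeries_two_dvd hidx

/-- Let `G` be a finite `p`-group with `|G : G'| = p^2` and `G' ≠ γ₃(G)`. Then `γ₃(G)` is
the unique normal subgroup of `G` of index `p^3`. -/
theorem stmt2 (p : ℕ) [Fact p.Prime] (G : Type*) [Group G] [Finite G]
    (hG : IsPGroup p G) (hidx : (commutator G).index = p ^ 2)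
    (hne : commutator G ≠ (⊤ : Subgroup G).lowerCentralSeries 2) :
    ∀ N : Subgroup G, N.Normal → N.index = p ^ 3 → N = (⊤ : Subgroup G).lowerCentralSeries 2 :=
  stmt2_general p G hidx
end

section
/- Let G be a finite p-group with |G : G'| = p^2. Then γ₃(G)/γ₄(G) is generated by at most 2 elements, hence |G : γ₄(G)| ≤ p^5. -/
/-!
Mathlib's `lowerCentralSeries n` is `γₙ₊₁`. Modulo `γₙ₊₂`, commutation is bilinear on `γₙ × G` and
kills `γₙ × G'` (three subgroups lemma), so if `x, y` generate `G` modulo `G'`, commutation with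
`x, y` sends generators of `γₙ/γₙ₊₁` to generators of `γₙ₊₁/γₙ₊₂`: `γ₂/γ₃` is generated by `[x,y]`
and `γ₃/γ₄` by `[x,y,x], [x,y,y]`. If `G/G'` is cyclic the same argument gives `G' = γ₃`, hence
`G' = 1` by nilpotency. Otherwise `G/G'` has exponent `p`, bilinearity passes this exponent down the
series, and `|G : γ₄| ≤ p² · p · p²`.
-/

open Subgroup
open scoped commutatorElement

section LowerCentralSeries

variable {G : Type*} [Group G]

theorem commutator_closure_closure_le {S : Subgroup G} [S.Normal] {T U : Set G}
    (h : ∀ a ∈ T, ∀ b ∈ U, ⁅a, b⁆ ∈ S) : ⁅closure T, closure U⁆ ≤ S := by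
  rw [← QuotientGroup.ker_mk' S, ← Subgroup.map_eq_bot_iff, map_commutator, MonoidHom.map_closure,
    MonoidHom.map_closure, commutator_eq_bot_iff_le_centralizer, centralizer_closure, closure_le]
  rintro _ ⟨a, ha, rfl⟩
  rw [SetLike.mem_coe, mem_centralizer_iff]
  rintro _ ⟨b, hb, rfl⟩
  rw [eq_comm, ← commutatorElement_eq_one_iff_mul_comm, ← map_commutatorElement,
    QuotientGroup.mk'_apply, QuotientGroup.eq_one_iff]
  exact h a ha b hb

theorem commutator_lowerCentralSeries_commutator_le (n : ℕ) :
    ⁅(⊤ : Subgroup G).lowerCentralSeries n, commutator G⁆ ≤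
      (⊤ : Subgroup G).lowerCentralSeries (n + 2) := by
  -- the three subgroups lemma `commutator_commutator_eq_bot_of_rotate`, applied in `G ⧸ N`
  let N := (⊤ : Subgroup G).lowerCentralSeries (n + 2)
  have key : ∀ A B C : Subgroup G, ⁅⁅A, B⁆, C⁆ ≤ N ↔
      ⁅⁅A.map (QuotientGroup.mk' N), B.map (QuotientGroup.mk' N)⁆,
        C.map (QuotientGroup.mk' N)⁆ = ⊥ := fun A B C => by
    rw [← map_commutator, ← map_commutator, Subgroup.map_eq_bot_iff, QuotientGroup.ker_mk']
  rw [commutator_comm, _root_.commutator_def, key]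
  refine commutator_commutator_eq_bot_of_rotate ((key _ _ _).mp ?_) ((key _ _ _).mp le_rfl)
  rw [commutator_comm ⊤ ((⊤ : Subgroup G).lowerCentralSeries n)]
  exact le_rfl

theorem commutatorElement_mem_lowerCentralSeries_succ_right {n : ℕ} {u : G}
    (hu : u ∈ (⊤ : Subgroup G).lowerCentralSeries n) (g : G) :
    ⁅g, u⁆ ∈ (⊤ : Subgroup G).lowerCentralSeries (n + 1) := by
  rw [← commutatorElement_inv]
  exact inv_mem (commutator_mem_commutator hu (mem_top g))

theorem normal_of_lowerCentralSeries_succ_le_of_le {n : ℕ} {H : Subgroup G}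
    (h₁ : (⊤ : Subgroup G).lowerCentralSeries (n + 1) ≤ H)
    (h₂ : H ≤ (⊤ : Subgroup G).lowerCentralSeries n) : H.Normal where
  conj_mem h hh g := by
    rw [← MulAut.conj_apply, conj_eq_commutatorElement_mul]
    exact mul_mem (h₁ (commutatorElement_mem_lowerCentralSeries_succ_right (h₂ hh) g)) hh

theorem closure_image2_commutator_sup_lowerCentralSeries {n : ℕ} {X C : Set G}
    (hX : closure X ⊔ commutator G = ⊤)
    (hC : closure C ⊔ (⊤ : Subgroup G).lowerCentralSeries (n + 1) =
      (⊤ : Subgroup G).lowerCentralSeries n) :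
    closure (Set.image2 (⁅·, ·⁆) C X) ⊔ (⊤ : Subgroup G).lowerCentralSeries (n + 2) =
      (⊤ : Subgroup G).lowerCentralSeries (n + 1) := by
  have hCn : closure C ≤ (⊤ : Subgroup G).lowerCentralSeries n := hC ▸ le_sup_left
  set S := closure (Set.image2 (⁅·, ·⁆) C X) ⊔ (⊤ : Subgroup G).lowerCentralSeries (n + 2)
  have hS : S ≤ (⊤ : Subgroup G).lowerCentralSeries (n + 1) := by
    refine sup_le ?_ (Subgroup.lowerCentralSeries_antitone _ (Nat.le_succ _))
    rw [closure_le]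
    rintro _ ⟨c, hc, x, -, rfl⟩
    exact commutator_mem_commutator (hCn (subset_closure hc)) (mem_top x)
  have : S.Normal := normal_of_lowerCentralSeries_succ_le_of_le le_sup_right hS
  refine le_antisymm hS ?_
  calc (⊤ : Subgroup G).lowerCentralSeries (n + 1)
      = ⁅closure (C ∪ (⊤ : Subgroup G).lowerCentralSeries (n + 1)),
          closure (X ∪ commutator G)⁆ := by
        rw [Subgroup.closure_union, Subgroup.closure_union, closure_eq, closure_eq, hC, hX]
        rfl
    _ ≤ S := by
      refine commutator_closure_closure_le ?_
      rintro a (ha | ha) b (hb | hb)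
      · exact mem_sup_left (subset_closure (Set.mem_image2_of_mem ha hb))
      · exact mem_sup_right (commutator_lowerCentralSeries_commutator_le n
          (commutator_mem_commutator (hCn (subset_closure ha)) hb))
      all_goals exact mem_sup_right (commutator_mem_commutator ha (mem_top b))

theorem closure_image2_commutatorElement_pair (x y : G) :
    closure (Set.image2 (⁅·, ·⁆) {x, y} {x, y}) = closure {⁅x, y⁆} := by
  refine le_antisymm ?_ (closure_mono (by simp))
  have hxy : ⁅x, y⁆ ∈ closure {⁅x, y⁆} := subset_closure rfl
  rw [closure_le]
  rintro _ ⟨a, ha, b, hb, rfl⟩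
  simp only [Set.mem_insert_iff, Set.mem_singleton_iff] at ha hb
  rcases ha with rfl | rfl <;> rcases hb with rfl | rfl <;> dsimp only
  · rw [SetLike.mem_coe, commutatorElement_self]; exact one_mem _
  · exact hxy
  · rw [SetLike.mem_coe, ← inv_mem_iff, commutatorElement_inv]; exact hxy
  · rw [SetLike.mem_coe, commutatorElement_self]; exact one_mem _

theorem commutatorElement_pow_mem_lowerCentralSeries {n k : ℕ} {u : G}
    (hu : u ∈ (⊤ : Subgroup G).lowerCentralSeries n)
    (huk : u ^ k ∈ (⊤ : Subgroup G).lowerCentralSeries (n + 1)) (g : G) :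
    ⁅u, g⁆ ^ k ∈ (⊤ : Subgroup G).lowerCentralSeries (n + 2) := by
  have hmul : ∀ m : ℕ,
      ⁅u ^ m, g⁆ * (⁅u, g⁆ ^ m)⁻¹ ∈ (⊤ : Subgroup G).lowerCentralSeries (n + 2) := by
    intro m
    induction m with
    | zero => simp
    | succ m ih =>
      have key : ⁅u ^ (m + 1), g⁆ * (⁅u, g⁆ ^ (m + 1))⁻¹ =
          ⁅u, ⁅u ^ m, g⁆⁆ * (⁅u ^ m, g⁆ * (⁅u, g⁆ ^ m)⁻¹) := by
        simp only [commutatorElement_def, pow_succ]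
        group
      rw [key]
      exact mul_mem (commutatorElement_mem_lowerCentralSeries_succ_right
        (commutator_mem_commutator (pow_mem hu m) (mem_top g)) u) ih
  have hsplit : ⁅u, g⁆ ^ k = (⁅u ^ k, g⁆ * (⁅u, g⁆ ^ k)⁻¹)⁻¹ * ⁅u ^ k, g⁆ := by group
  rw [hsplit]
  exact mul_mem (inv_mem (hmul k)) (commutator_mem_commutator huk (mem_top g))

theorem relIndex_closure_singleton_sup_le {N : Subgroup G} [N.Normal] {a : G} {k : ℕ}
    (hk : 0 < k) (ha : a ^ k ∈ N) : N.relIndex (closure {a} ⊔ N) ≤ k := by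
  rw [← QuotientGroup.ker_mk' N, ← comap_map_eq, ← MonoidHom.comap_bot, relIndex_comap,
    map_comap_eq_self_of_surjective (QuotientGroup.mk'_surjective N), relIndex_bot_left,
    MonoidHom.map_closure, Set.image_singleton, ← zpowers_eq_closure, Nat.card_zpowers]
  refine orderOf_le_of_pow_eq_one hk ?_
  rwa [← map_pow, QuotientGroup.mk'_apply, QuotientGroup.eq_one_iff]

theorem relIndex_lowerCentralSeries_le_of_closure_singleton_sup_eq {n k : ℕ} {a : G}
    (hk : 0 < k)
    (h : closure {a} ⊔ (⊤ : Subgroup G).lowerCentralSeries (n + 1) =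
      (⊤ : Subgroup G).lowerCentralSeries n)
    (ha : a ^ k ∈ (⊤ : Subgroup G).lowerCentralSeries (n + 1)) :
    ((⊤ : Subgroup G).lowerCentralSeries (n + 1)).relIndex
      ((⊤ : Subgroup G).lowerCentralSeries n) ≤ k :=
  h ▸ relIndex_closure_singleton_sup_le hk ha

theorem relIndex_lowerCentralSeries_le_of_closure_pair_sup_eq {n k : ℕ} {a b : G}
    (hk : 0 < k)
    (h : closure {a, b} ⊔ (⊤ : Subgroup G).lowerCentralSeries (n + 1) =
      (⊤ : Subgroup G).lowerCentralSeries n)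
    (ha : a ^ k ∈ (⊤ : Subgroup G).lowerCentralSeries (n + 1))
    (hb : b ^ k ∈ (⊤ : Subgroup G).lowerCentralSeries (n + 1)) :
    ((⊤ : Subgroup G).lowerCentralSeries (n + 1)).relIndex
      ((⊤ : Subgroup G).lowerCentralSeries n) ≤ k ^ 2 := by
  set H := closure {b} ⊔ (⊤ : Subgroup G).lowerCentralSeries (n + 1)
  have hsplit : closure {a} ⊔ H = (⊤ : Subgroup G).lowerCentralSeries n := by
    rw [← sup_assoc, ← Subgroup.closure_union, Set.singleton_union, h]
  have hH : H ≤ (⊤ : Subgroup G).lowerCentralSeries n := hsplit ▸ le_sup_right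
  have : H.Normal := normal_of_lowerCentralSeries_succ_le_of_le le_sup_right hH
  rw [← relIndex_mul_relIndex _ _ _ le_sup_right hH, sq]
  exact Nat.mul_le_mul (relIndex_closure_singleton_sup_le hk hb)
    (hsplit ▸ relIndex_closure_singleton_sup_le hk (mem_sup_right ha))

theorem lowerCentralSeries_eq_bot_of_succ_eq [Group.IsNilpotent G] {n : ℕ}
    (h : (⊤ : Subgroup G).lowerCentralSeries (n + 1) = (⊤ : Subgroup G).lowerCentralSeries n) :
    (⊤ : Subgroup G).lowerCentralSeries n = ⊥ := by
  have hstable : ∀ k, (⊤ : Subgroup G).lowerCentralSeries (n + k) =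
      (⊤ : Subgroup G).lowerCentralSeries n := by
    intro k
    induction k with
    | zero => rfl
    | succ k ih => rw [← add_assoc, Subgroup.lowerCentralSeries_succ, ih]; exact h
  obtain ⟨m, hm⟩ := Subgroup.nilpotent_iff_lowerCentralSeries.mp ‹_›
  rw [← hstable m, eq_bot_iff, ← hm]
  exact Subgroup.lowerCentralSeries_antitone _ (Nat.le_add_left m n)

theorem closure_sup_eq_top_of_closure_image_mk {N : Subgroup G} [N.Normal] {s : Set G}
    (h : closure (QuotientGroup.mk' N '' s) = ⊤) : closure s ⊔ N = ⊤ := by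
  rw [← QuotientGroup.ker_mk' N, ← comap_map_eq, MonoidHom.map_closure, h, comap_top]

theorem commutator_eq_bot_of_isCyclic_quotient [Group.IsNilpotent G] [IsCyclic (G ⧸ commutator G)] :
    commutator G = ⊥ := by
  obtain ⟨q, hq⟩ := isCyclic_iff_exists_zpowers_eq_top.mp ‹IsCyclic (G ⧸ commutator G)›
  obtain ⟨a, rfl⟩ := QuotientGroup.mk'_surjective _ q
  have hgen : closure {a} ⊔ commutator G = ⊤ := closure_sup_eq_top_of_closure_image_mk
    (by rwa [Set.image_singleton, ← zpowers_eq_closure])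
  have h := closure_image2_commutator_sup_lowerCentralSeries (n := 0) hgen
    (by rwa [top_lowerCentralSeries_one])
  rw [Set.image2_singleton, commutatorElement_self, closure_singleton_one, bot_sup_eq] at h
  rw [← top_lowerCentralSeries_one]
  exact lowerCentralSeries_eq_bot_of_succ_eq h

theorem closure_commutatorElement_sup_lowerCentralSeries_two {x y : G}
    (hgen : closure {x, y} ⊔ commutator G = ⊤) :
    closure {⁅x, y⁆} ⊔ (⊤ : Subgroup G).lowerCentralSeries 2 =
      (⊤ : Subgroup G).lowerCentralSeries 1 := by
  rw [← closure_image2_commutatorElement_pair, closure_image2_commutator_sup_lowerCentralSeries hgen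
    (by rwa [top_lowerCentralSeries_one])]

theorem closure_commutatorElement_pair_sup_lowerCentralSeries_three {x y : G}
    (hgen : closure {x, y} ⊔ commutator G = ⊤) :
    closure {⁅⁅x, y⁆, x⁆, ⁅⁅x, y⁆, y⁆} ⊔ (⊤ : Subgroup G).lowerCentralSeries 3 =
      (⊤ : Subgroup G).lowerCentralSeries 2 := by
  rw [← closure_image2_commutator_sup_lowerCentralSeries hgen
    (closure_commutatorElement_sup_lowerCentralSeries_two hgen), Set.image2_singleton_left,
    Set.image_pair]

theorem relIndex_lowerCentralSeries_three_one_le {x y : G} {p : ℕ} (hp : 0 < p)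
    (hgen : closure {x, y} ⊔ commutator G = ⊤) (hx : x ^ p ∈ commutator G) :
    ((⊤ : Subgroup G).lowerCentralSeries 3).relIndex ((⊤ : Subgroup G).lowerCentralSeries 1) ≤
      p ^ 3 := by
  have hc : ⁅x, y⁆ ∈ (⊤ : Subgroup G).lowerCentralSeries 1 :=
    commutator_mem_commutator (mem_top x) (mem_top y)
  have hc_pow : ⁅x, y⁆ ^ p ∈ (⊤ : Subgroup G).lowerCentralSeries 2 :=
    commutatorElement_pow_mem_lowerCentralSeries (mem_top x)
      (by rwa [top_lowerCentralSeries_one]) y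
  have h32 := relIndex_lowerCentralSeries_le_of_closure_pair_sup_eq hp
    (closure_commutatorElement_pair_sup_lowerCentralSeries_three hgen)
    (commutatorElement_pow_mem_lowerCentralSeries hc hc_pow x)
    (commutatorElement_pow_mem_lowerCentralSeries hc hc_pow y)
  have h21 := relIndex_lowerCentralSeries_le_of_closure_singleton_sup_eq hp
    (closure_commutatorElement_sup_lowerCentralSeries_two hgen) hc_pow
  rw [← relIndex_mul_relIndex _ _ _ (Subgroup.lowerCentralSeries_antitone _ (Nat.le_succ 2))
    (Subgroup.lowerCentralSeries_antitone _ (Nat.le_succ 1)), pow_succ]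
  exact Nat.mul_le_mul h32 h21

end LowerCentralSeries

theorem pow_eq_one_of_card_eq_prime_sq {Q : Type*} [Group Q] {p : ℕ} [hp : Fact p.Prime]
    (hQ : Nat.card Q = p ^ 2) (hcyc : ¬IsCyclic Q) (q : Q) : q ^ p = 1 := by
  have : Finite Q := Nat.finite_of_card_ne_zero (hQ ▸ pow_ne_zero 2 hp.out.ne_zero)
  obtain ⟨k, hk, hq⟩ := (Nat.dvd_prime_pow hp.out).mp (hQ ▸ orderOf_dvd_natCard q)
  rw [← orderOf_dvd_iff_pow_eq_one, hq]
  interval_cases k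
  · exact one_dvd p
  · exact (pow_one p).dvd
  · exact absurd (isCyclic_of_orderOf_eq_card q (hq.trans hQ.symm)) hcyc

theorem exists_closure_pair_eq_top_of_card_eq_prime_sq {Q : Type*} [Group Q] {p : ℕ}
    [hp : Fact p.Prime] (hQ : Nat.card Q = p ^ 2) (hcyc : ¬IsCyclic Q) :
    ∃ a b : Q, closure {a, b} = ⊤ := by
  have : Finite Q := Nat.finite_of_card_ne_zero (hQ ▸ pow_ne_zero 2 hp.out.ne_zero)
  have : Nontrivial Q := Finite.one_lt_card_iff_nontrivial.mp
    (hQ ▸ Nat.one_lt_pow two_ne_zero hp.out.one_lt)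
  obtain ⟨a, ha⟩ := exists_ne (1 : Q)
  have hcard_a : Nat.card (zpowers a) = p := by
    rw [Nat.card_zpowers, orderOf_eq_prime (pow_eq_one_of_card_eq_prime_sq hQ hcyc a) ha]
  obtain ⟨b, hb⟩ : ∃ b, b ∉ zpowers a := by
    by_contra! h
    exact hcyc (isCyclic_iff_exists_zpowers_eq_top.mpr ⟨a, eq_top_iff.mpr fun b _ => h b⟩)
  have hle : zpowers a ≤ closure {a, b} := by
    rw [zpowers_eq_closure]
    exact closure_mono (by simp)
  obtain ⟨k, hk, hK⟩ := (Nat.dvd_prime_pow hp.out).mp (hQ ▸ card_subgroup_dvd_card (closure {a, b}))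
  have hk1 : 1 ≤ k := by
    by_contra! h0
    have hdvd := hcard_a ▸ card_dvd_of_le hle
    rw [hK, Nat.lt_one_iff.mp h0, pow_zero] at hdvd
    exact hp.out.one_lt.ne' (Nat.dvd_one.mp hdvd)
  have hk_ne : k ≠ 1 := by
    rintro rfl
    refine hb ((eq_of_le_of_card_ge hle ?_).symm ▸ subset_closure (by simp))
    rw [hK, hcard_a, pow_one]
  refine ⟨a, b, eq_top_of_card_eq _ ?_⟩
  rw [hK, hQ, show k = 2 by omega]

theorem exists_closure_pair_sup_commutator_eq_top {G : Type*} [Group G] {p : ℕ} [Fact p.Prime]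
    (hidx : (commutator G).index = p ^ 2) (hcyc : ¬IsCyclic (G ⧸ commutator G)) :
    ∃ x y : G, closure {x, y} ⊔ commutator G = ⊤ ∧ ∀ g : G, g ^ p ∈ commutator G := by
  have hcard : Nat.card (G ⧸ commutator G) = p ^ 2 := by rw [← index_eq_card, hidx]
  obtain ⟨x', y', hxy'⟩ := exists_closure_pair_eq_top_of_card_eq_prime_sq hcard hcyc
  obtain ⟨x, rfl⟩ := QuotientGroup.mk'_surjective _ x'
  obtain ⟨y, rfl⟩ := QuotientGroup.mk'_surjective _ y'
  refine ⟨x, y, closure_sup_eq_top_of_closure_image_mk (by rwa [Set.image_pair]), fun g => ?_⟩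
  rw [← QuotientGroup.eq_one_iff, QuotientGroup.mk_pow]
  exact pow_eq_one_of_card_eq_prime_sq hcard hcyc _

/-- Let `G` be a finite `p`-group with `|G : G'| = p^2`. Then `γ₃(G)/γ₄(G)` is generated
by at most 2 elements, hence `|G : γ₄(G)| ≤ p^5`. -/
theorem stmt4 (p : ℕ) [Fact p.Prime] (G : Type*) [Group G] [Finite G]
    (hG : IsPGroup p G) (hidx : (commutator G).index = p ^ 2) :
    (∃ a b : G, a ∈ (⊤ : Subgroup G).lowerCentralSeries 2 ∧ b ∈ (⊤ : Subgroup G).lowerCentralSeries 2 ∧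
      Subgroup.closure {a, b} ⊔ (⊤ : Subgroup G).lowerCentralSeries 3 = (⊤ : Subgroup G).lowerCentralSeries 2) ∧
    ((⊤ : Subgroup G).lowerCentralSeries 3).index ≤ p ^ 5 := by
  have hp : p.Prime := Fact.out
  have := hG.isNilpotent
  have hγ1 := top_lowerCentralSeries_one (G := G)
  by_cases hcyc : IsCyclic (G ⧸ commutator G)
  · have hG' := commutator_eq_bot_of_isCyclic_quotient (G := G)
    have hγ_bot {n : ℕ} (hn : 1 ≤ n) : (⊤ : Subgroup G).lowerCentralSeries n = ⊥ :=
      le_bot_iff.mp (hG' ▸ hγ1 ▸ Subgroup.lowerCentralSeries_antitone _ hn)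
    have hidx_bot : (⊥ : Subgroup G).index = p ^ 2 := hG' ▸ hidx
    rw [hγ_bot (n := 2) (by norm_num), hγ_bot (n := 3) (by norm_num), hidx_bot]
    exact ⟨⟨1, 1, one_mem _, one_mem _, by simp⟩, Nat.pow_le_pow_right hp.pos (by norm_num)⟩
  · obtain ⟨x, y, hgen, hexp⟩ := exists_closure_pair_sup_commutator_eq_top hidx hcyc
    have hc : ⁅x, y⁆ ∈ (⊤ : Subgroup G).lowerCentralSeries 1 :=
      commutator_mem_commutator (mem_top x) (mem_top y)
    refine ⟨⟨_, _, commutator_mem_commutator hc (mem_top x),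
      commutator_mem_commutator hc (mem_top y),
      closure_commutatorElement_pair_sup_lowerCentralSeries_three hgen⟩, ?_⟩
    rw [← relIndex_mul_index (Subgroup.lowerCentralSeries_antitone _ (by norm_num : 1 ≤ 3)), hγ1,
      hidx, show p ^ 5 = p ^ 3 * p ^ 2 by ring]
    exact Nat.mul_le_mul_right _ (relIndex_lowerCentralSeries_three_one_le hp.pos hgen (hexp x))
end

section
/- Let G be a finite p-group with |G| ≥ p^3 and |G : G'| = p^2, and let H be a maximal subgroup of G with H' = 1 (H abelian). Then Z(G) has order p and G is of maximal class (nilpotency class equal to log_p|G| − 1). -/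
/-!
Pick `x ∉ H`, so that `H ⊔ ⟨x⟩ = G`. Since `H` is abelian and normal, `k ↦ ⁅k, x⁆` is a
homomorphism `H →* G`; its kernel is `Z(G)`, which lies in `H` because `G` is not abelian,
and its image is `G'`, because modulo the image `x` commutes with `H`. Hence
`|G| = p |H| = p |Z(G)| |G'|`, and comparing with `|G| = p² |G'|` gives `|Z(G)| = p`.
The nontrivial normal subgroup `G'` meets `Z(G)`, so `Z(G) ≤ G'`; then `G / Z(G)` satisfies
the same hypotheses with order `p^(n-1)`, and induction down to order `p²` (where `G' = 1`)
gives class `n - 1`.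
-/

open Subgroup commutatorElement

section

variable {G : Type*} [Group G]

theorem Subgroup.isCoatom_of_index_eq_prime {H : Subgroup G} {p : ℕ} (hp : p.Prime)
    (hH : H.index = p) : IsCoatom H := by
  have : H.FiniteIndex := ⟨hH ▸ hp.ne_zero⟩
  refine ⟨fun h => hp.one_lt.ne' (by rw [← hH, h, index_top]), fun K hK => index_eq_one.mp ?_⟩
  have hdvd : K.index ∣ p := hH ▸ index_dvd_of_le hK.le
  exact (hp.eq_one_or_self_of_dvd _ hdvd).resolve_right (hH ▸ (index_strictAnti hK).ne)

theorem Subgroup.sup_zpowers_eq_top_of_isCoatom {H : Subgroup G} (hH : IsCoatom H) {x : G}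
    (hx : x ∉ H) : H ⊔ zpowers x = ⊤ :=
  hH.2 _ (left_lt_sup.mpr fun h => hx (h (mem_zpowers x)))

theorem Subgroup.subset_center_of_sup_zpowers_eq_top {K : Subgroup G} {x : G}
    (hKx : K ⊔ zpowers x = ⊤) {s : Set G} (hK : K ≤ centralizer s) (hx : x ∈ centralizer s) :
    s ⊆ center G := by
  rw [← centralizer_eq_top_iff_subset, eq_top_iff, ← hKx]
  exact sup_le hK (zpowers_le.mpr hx)

theorem Subgroup.center_eq_top_of_sup_zpowers_eq_top {K : Subgroup G} [IsMulCommutative K]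
    {x : G} (hKx : K ⊔ zpowers x = ⊤) (hx : x ∈ centralizer K) : center G = ⊤ := by
  have hK : K ≤ center G := subset_center_of_sup_zpowers_eq_top hKx (le_centralizer K) hx
  have hxZ : x ∈ center G := by
    refine Set.singleton_subset_iff.mp (subset_center_of_sup_zpowers_eq_top hKx ?_ ?_)
    · exact le_centralizer_iff.mp (zpowers_le.mpr hx) |>.trans (centralizer_le (by simp))
    · exact mem_centralizer_singleton_iff.mpr rfl
  rw [eq_top_iff, ← hKx]
  exact sup_le hK (zpowers_le.mpr hxZ)

theorem Subgroup.center_le_of_isCoatom {K : Subgroup G} [IsMulCommutative K] (hK : IsCoatom K)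
    (hG : _root_.commutator G ≠ ⊥) : center G ≤ K := by
  by_contra h
  obtain ⟨z, hz, hzK⟩ := SetLike.not_le_iff_exists.mp h
  exact hG <| (commutator_eq_bot_iff_center_eq_top G).mpr <|
    center_eq_top_of_sup_zpowers_eq_top (sup_zpowers_eq_top_of_isCoatom hK hzK)
      (center_le_centralizer _ hz)

theorem commutator_le_of_sup_zpowers_eq_top {K : Subgroup G} [IsMulCommutative K] {x : G}
    (hKx : K ⊔ zpowers x = ⊤) {N : Subgroup G} [N.Normal] (hN : ∀ k ∈ K, ⁅k, x⁆ ∈ N) :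
    commutator G ≤ N := by
  rw [← Normal.quotient_commutative_iff_commutator_le, ← center_eq_top_iff]
  have hπ := QuotientGroup.mk'_surjective N
  refine center_eq_top_of_sup_zpowers_eq_top (K := K.map (QuotientGroup.mk' N))
    (x := QuotientGroup.mk' N x) ?_ ?_
  · rw [← MonoidHom.map_zpowers, ← Subgroup.map_sup, hKx, map_top_of_surjective _ hπ]
  · rintro _ ⟨k, hk, rfl⟩
    rw [← commutatorElement_eq_one_iff_mul_comm, ← map_commutatorElement,
      QuotientGroup.mk'_apply, QuotientGroup.eq_one_iff]
    exact hN k hk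

theorem Subgroup.commutatorElement_mem_of_mem_left {K : Subgroup G} [K.Normal] {k : G}
    (hk : k ∈ K) (g : G) : ⁅k, g⁆ ∈ K :=
  commutator_le_left K ⊤ (commutator_mem_commutator hk (mem_top g))

def Subgroup.commutatorElementHom (K : Subgroup G) [K.Normal] [IsMulCommutative K] (x : G) :
    K →* G where
  toFun k := ⁅(k : G), x⁆
  map_one' := by simp
  map_mul' a b := by
    have hcomm : ∀ {u v : G}, u ∈ K → v ∈ K → u * v = v * u := fun hu hv =>
      mem_centralizer_iff.mp (le_centralizer K hv) _ hu
    have hb := commutatorElement_mem_of_mem_left b.2 x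
    have ha := commutatorElement_mem_of_mem_left a.2 x
    calc ⁅((a * b : K) : G), x⁆ = a * ⁅(b : G), x⁆ * (a : G)⁻¹ * ⁅(a : G), x⁆ := by
          simp only [coe_mul, commutatorElement_def]; group
      _ = ⁅(a : G), x⁆ * ⁅(b : G), x⁆ := by
          rw [hcomm a.2 hb, mul_inv_cancel_right, hcomm hb ha]

namespace Subgroup

variable {K : Subgroup G} [K.Normal] [IsMulCommutative K] {x : G}

@[simp]
theorem commutatorElementHom_apply (k : K) : commutatorElementHom K x k = ⁅(k : G), x⁆ :=
  rfl

theorem normal_range_commutatorElementHom (hKx : K ⊔ zpowers x = ⊤) :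
    (commutatorElementHom K x).range.Normal := by
  set f := commutatorElementHom K x
  rw [← normalizer_eq_top_iff, eq_top_iff, ← hKx]
  refine sup_le ?_ (zpowers_le.mpr ?_)
  · have hfK : (f.range : Set G) ⊆ K := by
      rintro _ ⟨k, rfl⟩
      exact commutatorElement_mem_of_mem_left k.2 x
    exact (le_centralizer K).trans ((centralizer_le hfK).trans (centralizer_le_normalizer _))
  · have hconj : ((MulAut.conj x : G ≃* G) : G →* G).comp f =
        f.comp ((MulAut.conjNormal x : K ≃* K) : K →* K) := by
      ext k
      simp [f, MulAut.conjNormal_apply]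
    rw [mem_normalizer_iff_map_conj_eq, ← MonoidHom.range_comp, hconj, MonoidHom.range_comp,
      MulEquiv.range_eq_top, ← MonoidHom.range_eq_map]

theorem range_commutatorElementHom (hKx : K ⊔ zpowers x = ⊤) :
    (commutatorElementHom K x).range = _root_.commutator G := by
  have := normal_range_commutatorElementHom hKx
  refine le_antisymm ?_ (commutator_le_of_sup_zpowers_eq_top hKx fun k hk => ⟨⟨k, hk⟩, rfl⟩)
  rintro _ ⟨k, rfl⟩
  exact commutator_mem_commutator (mem_top _) (mem_top _)

theorem ker_commutatorElementHom (hKx : K ⊔ zpowers x = ⊤) :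
    (commutatorElementHom K x).ker = (center G).subgroupOf K := by
  ext k
  rw [MonoidHom.mem_ker, mem_subgroupOf, commutatorElementHom_apply,
    commutatorElement_eq_one_iff_mul_comm]
  refine ⟨fun hkx => Set.singleton_subset_iff.mp (subset_center_of_sup_zpowers_eq_top hKx ?_ ?_),
    fun hk => (mem_center_iff.mp hk x).symm⟩
  · exact (le_centralizer K).trans (centralizer_le (Set.singleton_subset_iff.mpr k.2))
  · exact mem_centralizer_singleton_iff.mpr hkx.symm

theorem card_eq_card_center_mul_card_commutator [Finite G] (hKx : K ⊔ zpowers x = ⊤)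
    (hZ : center G ≤ K) : Nat.card K = Nat.card (center G) * Nat.card (_root_.commutator G) := by
  set f := commutatorElementHom K x
  rw [← f.ker.card_mul_index, index_ker f, range_commutatorElementHom hKx,
    ker_commutatorElementHom hKx, Nat.card_congr (subgroupOfEquivOfLe hZ).toEquiv]

end Subgroup

end

namespace IsPGroup

variable {p : ℕ} [Fact p.Prime] {G : Type*} [Group G] [Finite G] (hG : IsPGroup p G)
include hG

theorem normal_of_index_eq {H : Subgroup G} (hH : H.index = p) : H.Normal :=
  have := hG.isNilpotent
  NormalizerCondition.normal_of_coatom H Group.normalizerCondition_of_isNilpotent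
    (isCoatom_of_index_eq_prime Fact.out hH)

theorem inf_center_ne_bot {N : Subgroup G} [N.Normal] (hN : N ≠ ⊥) : N ⊓ center G ≠ ⊥ := by
  have : Nontrivial N := N.nontrivial_iff_ne_bot.mpr hN
  obtain ⟨k, hk, hcard⟩ := (hG.to_subgroup N).nontrivial_iff_card.mp inferInstance
  obtain ⟨b, hb, hb1⟩ :=
    (hG.of_equiv ConjAct.toConjAct).exists_fixed_point_of_prime_dvd_card_of_fixed_point
      N (hcard ▸ dvd_pow_self p hk.ne') (a := 1) (fun g => smul_one g)
  refine (Subgroup.ne_bot_iff_exists_ne_one).mpr ⟨⟨b, b.2, mem_center_iff.mpr fun g => ?_⟩, ?_⟩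
  · have := congrArg Subtype.val (hb (ConjAct.toConjAct g))
    rw [ConjAct.Subgroup.val_conj_smul, ConjAct.toConjAct_smul] at this
    exact mul_inv_eq_iff_eq_mul.mp this
  · exact fun h => hb1 (Subtype.ext (congrArg Subtype.val h).symm)

theorem center_le_of_normal (hZ : Nat.card (center G) = p) {N : Subgroup G} [N.Normal]
    (hN : N ≠ ⊥) : center G ≤ N := by
  have hle : N ⊓ center G ≤ center G := inf_le_right
  have hdvd : Nat.card (N ⊓ center G : Subgroup G) ∣ p := hZ ▸ card_dvd_of_le hle
  have hcard := ((Fact.out : p.Prime).eq_one_or_self_of_dvd _ hdvd).resolve_left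
    (card_eq_one.not.mpr (hG.inf_center_ne_bot hN))
  exact (eq_of_le_of_card_ge hle (hZ ▸ hcard.ge)).ge.trans inf_le_left

end IsPGroup

theorem commutator_ne_bot_of_index_eq_sq {p n : ℕ} (hp : p.Prime) {G : Type*} [Group G]
    (hcard : Nat.card G = p ^ n) (hn : 3 ≤ n) (hidx : (commutator G).index = p ^ 2) :
    commutator G ≠ ⊥ := by
  intro h
  rw [h, index_bot, hcard] at hidx
  have := Nat.pow_right_injective hp.two_le hidx
  omega

theorem nilpotencyClass_eq_one_of_commutator_eq_bot {G : Type*} [Group G] [Nontrivial G]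
    [Group.IsNilpotent G] (h : commutator G = ⊥) : Group.nilpotencyClass G = 1 := by
  have hle := Group.IsNilpotent.nilpotencyClass_le_one_iff.mpr ((commutator_eq_bot_iff G).mp h)
  have hne : Group.nilpotencyClass G ≠ 0 :=
    fun h0 => not_subsingleton G (Group.nilpotencyClass_zero_iff_subsingleton.mp h0)
  omega

section

variable {p : ℕ} [Fact p.Prime] {G : Type*} [Group G] [Finite G]

theorem card_center_eq_of_index_commutator_eq_sq (hG' : commutator G ≠ ⊥)
    (hidx : (commutator G).index = p ^ 2) {H : Subgroup G} [H.Normal] [IsMulCommutative H]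
    (hH : H.index = p) : Nat.card (center G) = p := by
  have hHmax := isCoatom_of_index_eq_prime Fact.out hH
  obtain ⟨x, -, hx⟩ := SetLike.exists_of_lt hHmax.1.lt_top
  have hcardH := card_eq_card_center_mul_card_commutator
    (sup_zpowers_eq_top_of_isCoatom hHmax hx) (center_le_of_isCoatom hHmax hG')
  have hG := H.index_mul_card
  rw [hH, hcardH, ← (commutator G).index_mul_card, hidx] at hG
  have : 0 < Nat.card (commutator G) := Nat.card_pos
  refine Nat.eq_of_mul_eq_mul_left (Nat.mul_pos (Fact.out : p.Prime).pos this) ?_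
  rw [sq] at hG
  linarith

theorem nilpotencyClass_eq_of_index_commutator_eq_sq {n : ℕ} (hcard : Nat.card G = p ^ n)
    (hn : 2 ≤ n) (hidx : (commutator G).index = p ^ 2) (H : Subgroup G) [IsMulCommutative H]
    (hH : H.index = p) : Group.nilpotencyClass G = n - 1 := by
  have hp : p.Prime := Fact.out
  induction n, hn using Nat.le_induction generalizing G with
  | base =>
    have hG := IsPGroup.of_card hcard
    have := hG.isNilpotent
    have : Nontrivial G := hG.nontrivial_iff_card.mpr ⟨2, two_pos, hcard⟩
    have hG' : commutator G = ⊥ := by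
      have := (commutator G).index_mul_card
      rw [hidx, hcard] at this
      exact card_eq_one.mp ((Nat.mul_eq_left (pow_ne_zero 2 hp.ne_zero)).mp this)
    exact nilpotencyClass_eq_one_of_commutator_eq_bot hG'
  | succ n hn ih =>
    have hG := IsPGroup.of_card hcard
    have := hG.isNilpotent
    have : Nontrivial G := hG.nontrivial_iff_card.mpr ⟨n + 1, n.succ_pos, hcard⟩
    have : H.Normal := hG.normal_of_index_eq hH
    have hG' := commutator_ne_bot_of_index_eq_sq hp hcard (by omega) hidx
    have hZ := card_center_eq_of_index_commutator_eq_sq hG' hidx hH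
    have hZH := center_le_of_isCoatom (isCoatom_of_index_eq_prime hp hH) hG'
    have hZG' := hG.center_le_of_normal hZ hG'
    have hπ := QuotientGroup.mk'_surjective (center G)
    have hcardQ : Nat.card (G ⧸ center G) = p ^ n := by
      have := (center G).card_eq_card_quotient_mul_card_subgroup
      rw [hcard, hZ, pow_succ] at this
      exact Nat.eq_of_mul_eq_mul_right hp.pos this.symm
    have hidxQ : (commutator (G ⧸ center G)).index = p ^ 2 := by
      rw [← derivedSeries_one, ← map_derivedSeries_eq hπ, derivedSeries_one,
        index_map_eq _ hπ (by rwa [QuotientGroup.ker_mk']), hidx]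
    have hHQ : (H.map (QuotientGroup.mk' (center G))).index = p := by
      rw [index_map_eq _ hπ (by rwa [QuotientGroup.ker_mk']), hH]
    rw [Group.nilpotencyClass_eq_quotient_center_plus_one, ih hcardQ hidxQ _ hHQ]
    omega

end

theorem stmt5_general (p n : ℕ) [Fact p.Prime] (G : Type*) [Group G] [Finite G]
    (hcard : Nat.card G = p ^ n) (hn : 3 ≤ n)
    (hidx : (commutator G).index = p ^ 2)
    (H : Subgroup G) (hH : H.index = p) (hab : (⁅H, H⁆ : Subgroup G) = ⊥) :
    Nat.card (Subgroup.center G) = p ∧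
      Group.nilpotencyClass G = n - 1 := by
  have : IsMulCommutative H := commutator_self_eq_bot_iff.mp hab
  have : H.Normal := (IsPGroup.of_card hcard).normal_of_index_eq hH
  have hG' := commutator_ne_bot_of_index_eq_sq Fact.out hcard hn hidx
  exact ⟨card_center_eq_of_index_commutator_eq_sq hG' hidx hH,
    nilpotencyClass_eq_of_index_commutator_eq_sq hcard (by omega) hidx H hH⟩

/-- Let `G` be a finite `p`-group with `|G| = p^n ≥ p^3` and `|G : G'| = p^2`, and let `H`
be an abelian maximal subgroup of `G`. Then `Z(G)` has order `p` and `G` is of maximal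
class, i.e. its nilpotency class is `n - 1`. -/
theorem stmt5 (p n : ℕ) [Fact p.Prime] (G : Type*) [Group G] [Finite G]
    (hG : IsPGroup p G) (hcard : Nat.card G = p ^ n) (hn : 3 ≤ n)
    (hidx : (commutator G).index = p ^ 2)
    (H : Subgroup G) (hH : H.index = p) (hab : (⁅H, H⁆ : Subgroup G) = ⊥) :
    Nat.card (Subgroup.center G) = p ∧
      Group.nilpotencyClass G = n - 1 :=
  stmt5_general p n G hcard hn hidx H hH hab
end

section
/- Let G be a finite p-group with |G| ≥ p^3 and |G : G'| = p^2, and let H be a maximal subgroup of G. Then G/H' is a p-group of maximal class. -/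
/-!
Write `Q = G/H'`. Since `H/G'` is cyclic, `H' ≤ [G', H] ≤ [G', G]`, and `[G', G] < G'` because `G`
is nilpotent with `G' ≠ 1`. Hence `|Q : Q'| = |G : G'| = p²`, `Q` is nonabelian (so `|Q| = p^m`
with `m ≥ 3`), and `H/H'` is an abelian normal subgroup of index `p` in `Q`.

Let `Q` be any group of order `p^m` with `|Q : Q'| = p²` and an abelian normal subgroup `A` of
index `p`, and pick `x ∉ A`. As `Q = A⟨x⟩`, the endomorphism `a ↦ [x, a]` of `A` has kernel `Z(Q)`
(which lies in `A` once `Q` is nonabelian) and image `Q'`, so `|Z(Q)| = |A| / |Q'| = p`. The last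
nontrivial term of the lower central series shows `Z(Q) ∩ Q' ≠ 1`, whence `Z(Q) ≤ Q'`, and
`Q/Z(Q)` satisfies the same hypotheses with `m - 1`. Induction on `m` gives class `m - 1`.
-/

open scoped commutatorElement

section

variable {G : Type*} [Group G]

theorem card_eq_pow_of_index_eq_pow (H : Subgroup G) {p k j : ℕ} (hp : 0 < p)
    (hG : Nat.card G = p ^ (k + j)) (hH : H.index = p ^ j) : Nat.card H = p ^ k := by
  have := H.card_mul_index
  rw [hG, hH, pow_add] at this
  exact Nat.eq_of_mul_eq_mul_right (pow_pos hp j) this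

theorem index_eq_pow_of_card_eq_pow (H : Subgroup G) {p k j : ℕ} (hp : 0 < p)
    (hG : Nat.card G = p ^ (k + j)) (hH : Nat.card H = p ^ k) : H.index = p ^ j := by
  have := H.card_mul_index
  rw [hG, hH, pow_add] at this
  exact Nat.eq_of_mul_eq_mul_left (pow_pos hp k) this

theorem two_lt_of_card_eq_pow [Finite G] {p m : ℕ} (hp : 1 < p) (hcard : Nat.card G = p ^ m)
    (hidx : (commutator G).index = p ^ 2) (hne : commutator G ≠ ⊥) : 2 < m := by
  have := (commutator G).card_mul_index
  rw [hidx, hcard] at this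
  have hlt : p ^ 2 < p ^ m := this ▸ lt_mul_left (pow_pos (zero_lt_one.trans hp) 2)
    ((Subgroup.one_lt_card_iff_ne_bot _).mpr hne)
  exact (Nat.pow_lt_pow_iff_right hp).mp hlt

theorem map_mk'_commutator (N : Subgroup G) [N.Normal] :
    (commutator G).map (QuotientGroup.mk' N) = commutator (G ⧸ N) := by
  rw [map_commutator_eq, QuotientGroup.range_mk']
  rfl

theorem index_commutator_quotient {N : Subgroup G} [N.Normal] (h : N ≤ commutator G) :
    (commutator (G ⧸ N)).index = (commutator G).index := by
  rw [← map_mk'_commutator, Subgroup.index_map_eq _ (QuotientGroup.mk'_surjective N)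
    (by rwa [QuotientGroup.ker_mk'])]

theorem commutator_le_of_index_eq_prime {H : Subgroup G} [H.Normal] {p : ℕ} [Fact p.Prime]
    (hH : H.index = p) : commutator G ≤ H :=
  have : IsCyclic (G ⧸ H) := isCyclic_of_prime_card hH
  Subgroup.Normal.quotient_commutative_iff_commutator_le.mp inferInstance

theorem isMulCommutative_map_mk'_commutator (H : Subgroup G) [H.Normal] :
    IsMulCommutative (H.map (QuotientGroup.mk' ⁅H, H⁆)) := by
  rw [← Subgroup.commutator_self_eq_bot_iff, ← Subgroup.map_commutator, Subgroup.map_eq_bot_iff,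
    QuotientGroup.ker_mk']

theorem eq_bot_of_le_commutator_top [Group.IsNilpotent G] {N : Subgroup G} (h : N ≤ ⁅N, ⊤⁆) :
    N = ⊥ := by
  have hle : ∀ n, N ≤ (⊤ : Subgroup G).lowerCentralSeries n := by
    intro n
    induction n with
    | zero => exact le_top
    | succ n ih => exact h.trans (Subgroup.commutator_mono ih le_rfl)
  obtain ⟨n, hn⟩ := Subgroup.nilpotent_iff_lowerCentralSeries.mp ‹Group.IsNilpotent G›
  exact le_bot_iff.mp (hn ▸ hle n)

theorem commutator_inf_center_ne_bot [Group.IsNilpotent G] (h : commutator G ≠ ⊥) :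
    commutator G ⊓ Subgroup.center G ≠ ⊥ := by
  set c := Group.nilpotencyClass G
  have hc : 2 ≤ c := by
    by_contra! hc
    exact h ((commutator_eq_bot_iff G).mpr
      (Group.IsNilpotent.nilpotencyClass_le_one_iff.mp (by omega)))
  have hL : (⊤ : Subgroup G).lowerCentralSeries (c - 1) ≠ ⊥ := by
    rw [Ne, Subgroup.lowerCentralSeries_eq_bot_iff_nilpotencyClass_le]
    omega
  have hLZ : (⊤ : Subgroup G).lowerCentralSeries (c - 1) ≤ Subgroup.center G := by
    rw [← Subgroup.commutator_top_right_eq_bot_iff_le_center, ← Subgroup.lowerCentralSeries_succ,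
      Nat.sub_add_cancel (by omega)]
    exact Subgroup.lowerCentralSeries_nilpotencyClass
  have hLG' : (⊤ : Subgroup G).lowerCentralSeries (c - 1) ≤ commutator G :=
    Subgroup.top_lowerCentralSeries_one (G := G) ▸ Subgroup.lowerCentralSeries_antitone _ (by omega)
  exact ne_bot_of_le_ne_bot hL (le_inf hLG' hLZ)

theorem center_le_commutator_of_card_center_eq_prime [Finite G] [Group.IsNilpotent G] {p : ℕ}
    (hp : p.Prime) (hZ : Nat.card (Subgroup.center G) = p) (h : commutator G ≠ ⊥) :
    Subgroup.center G ≤ commutator G := by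
  have hK : Nat.card ↥(commutator G ⊓ Subgroup.center G) = p := by
    have hdvd := Subgroup.card_dvd_of_le (inf_le_right : commutator G ⊓ Subgroup.center G ≤ _)
    rw [hZ] at hdvd
    refine (hp.eq_one_or_self_of_dvd _ hdvd).resolve_left ?_
    rw [Subgroup.card_eq_one]
    exact commutator_inf_center_ne_bot h
  have := Subgroup.eq_of_le_of_card_ge inf_le_right (hZ.trans hK.symm).le
  exact this ▸ inf_le_left

theorem commutator_le_commutator_top_of_isCyclic {M : Subgroup G} [M.Normal]
    [IsCyclic (G ⧸ M)] : commutator G ≤ ⁅M, ⊤⁆ := by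
  rw [← Subgroup.Normal.quotient_commutative_iff_commutator_le]
  refine MonoidHom.isMulCommutative_of_isCyclic_of_ker_le_center
    (QuotientGroup.map _ M (MonoidHom.id G) ?_) ?_
  · simpa using Subgroup.commutator_le_left M ⊤
  · intro y hy
    obtain ⟨g, rfl⟩ := QuotientGroup.mk'_surjective _ y
    rw [MonoidHom.mem_ker, QuotientGroup.map_mk', MonoidHom.id_apply,
      QuotientGroup.eq_one_iff] at hy
    refine Subgroup.mem_center_iff.mpr fun z ↦ Eq.symm ?_
    obtain ⟨h, rfl⟩ := QuotientGroup.mk'_surjective _ z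
    rw [← commutatorElement_eq_one_iff_mul_comm, ← map_commutatorElement, QuotientGroup.mk'_apply,
      QuotientGroup.eq_one_iff]
    exact Subgroup.commutator_mem_commutator hy (Subgroup.mem_top h)

theorem commutator_self_le_of_isCyclic {H M : Subgroup G} [M.Normal]
    [IsCyclic (H ⧸ M.subgroupOf H)] : ⁅H, H⁆ ≤ ⁅M, H⁆ := by
  have := Subgroup.map_mono (f := H.subtype)
    (commutator_le_commutator_top_of_isCyclic (M := M.subgroupOf H))
  rw [Subgroup.map_subtype_commutator, Subgroup.map_commutator, Subgroup.subgroupOf_map_subtype,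
    ← MonoidHom.range_eq_map, Subgroup.range_subtype] at this
  exact this.trans (Subgroup.commutator_mono inf_le_left le_rfl)

theorem commutator_self_le_commutator_commutator_top {H : Subgroup G} [H.Normal] {p : ℕ}
    [hp : Fact p.Prime] (hidx : (commutator G).index = p ^ 2) (hH : H.index = p) :
    ⁅H, H⁆ ≤ ⁅commutator G, ⊤⁆ := by
  have hG'H := commutator_le_of_index_eq_prime hH
  have : IsCyclic (H ⧸ (commutator G).subgroupOf H) := by
    refine isCyclic_of_prime_card (p := p) (Nat.eq_of_mul_eq_mul_right hp.out.pos ?_)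
    rw [← pow_two, ← hidx, ← hH]
    exact Subgroup.relIndex_mul_index hG'H
  exact commutator_self_le_of_isCyclic.trans (Subgroup.commutator_mono le_rfl le_top)

theorem sup_zpowers_eq_top_of_notMem {A : Subgroup G} (hA : A.index.Prime) {x : G} (hx : x ∉ A) :
    A ⊔ Subgroup.zpowers x = ⊤ := by
  have hrel := Subgroup.relIndex_mul_index (le_sup_left : A ≤ A ⊔ Subgroup.zpowers x)
  rcases hA.eq_one_or_self_of_dvd _ (Dvd.intro_left _ hrel) with h | h
  · exact Subgroup.index_eq_one.mp h
  · rw [h, Nat.mul_eq_right hA.ne_zero, Subgroup.relIndex_eq_one] at hrel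
    exact absurd (hrel (Subgroup.mem_sup_right (Subgroup.mem_zpowers x))) hx

theorem commutator_le_of_closure_eq_top_s6 {N : Subgroup G} [N.Normal] {S : Set G}
    (hS : Subgroup.closure S = ⊤) (h : ∀ s ∈ S, ∀ t ∈ S, ⁅s, t⁆ ∈ N) : commutator G ≤ N := by
  rw [← Subgroup.Normal.quotient_commutative_iff_commutator_le]
  have hS' : Subgroup.closure (QuotientGroup.mk' N '' S) = ⊤ := by
    rw [← MonoidHom.map_closure, hS,
      Subgroup.map_top_of_surjective _ (QuotientGroup.mk'_surjective N)]
  have hcomm := Subgroup.isMulCommutative_closure (k := QuotientGroup.mk' N '' S) <| by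
    rintro _ ⟨s, hs, rfl⟩ _ ⟨t, ht, rfl⟩
    rw [← commutatorElement_eq_one_iff_mul_comm, ← map_commutatorElement, QuotientGroup.mk'_apply,
      QuotientGroup.eq_one_iff]
    exact h s hs t ht
  rwa [hS', ← Subgroup.le_centralizer_iff_isMulCommutative, Subgroup.coe_top,
    Subgroup.centralizer_univ, top_le_iff, Subgroup.center_eq_top_iff] at hcomm

theorem commutator_le_of_sup_zpowers_eq_top_s6 {A N : Subgroup G} [N.Normal] [IsMulCommutative A]
    {x : G} (hx : A ⊔ Subgroup.zpowers x = ⊤) (h : ∀ a ∈ A, ⁅x, a⁆ ∈ N) :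
    commutator G ≤ N := by
  refine commutator_le_of_closure_eq_top_s6 (S := insert x A) ?_ ?_
  · rw [Set.insert_eq, Subgroup.closure_union, ← Subgroup.zpowers_eq_closure, Subgroup.closure_eq,
      sup_comm, hx]
  · rintro a (rfl | ha) b (rfl | hb)
    · rw [commutatorElement_self]
      exact one_mem N
    · exact h b hb
    · rw [← commutatorElement_inv]
      exact inv_mem (h a ha)
    · rw [commutatorElement_eq_one_iff_mul_comm.mpr (setLike_mul_comm ha hb)]
      exact one_mem N

theorem center_le_of_commutator_ne_bot {A : Subgroup G} [IsMulCommutative A]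
    (hA : A.index.Prime) (h : commutator G ≠ ⊥) : Subgroup.center G ≤ A := by
  intro z hz
  by_contra hzA
  refine h (eq_bot_iff.mpr (commutator_le_of_sup_zpowers_eq_top_s6
    (sup_zpowers_eq_top_of_notMem hA hzA) fun a _ ↦ ?_))
  rw [commutatorElement_eq_one_iff_commute.mpr (Subgroup.mem_center_iff.mp hz a).symm]
  exact one_mem _

section CommutatorHom

variable (A : Subgroup G) [A.Normal] [IsMulCommutative A] (x : G)

open scoped IsMulCommutative

-- The scoped instance makes `A` a `CommGroup`, so that `a ↦ (x a x⁻¹) / a` is a homomorphism.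
def commutatorHom : A →* A :=
  (MulAut.conjNormal x).toMonoidHom / MonoidHom.id A

theorem coe_commutatorHom_apply (a : A) : (commutatorHom A x a : G) = ⁅x, (a : G)⁆ := by
  simp [commutatorHom, commutatorElement_def, div_eq_mul_inv]

theorem mem_map_range_commutatorHom {g : G} :
    g ∈ (commutatorHom A x).range.map A.subtype ↔ ∃ a ∈ A, ⁅x, a⁆ = g := by
  constructor
  · rintro ⟨_, ⟨a, rfl⟩, rfl⟩
    exact ⟨a, a.2, (coe_commutatorHom_apply A x a).symm⟩
  · rintro ⟨a, ha, rfl⟩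
    exact ⟨_, ⟨⟨a, ha⟩, rfl⟩, coe_commutatorHom_apply A x _⟩

variable {A x}

theorem ker_commutatorHom (hx : A ⊔ Subgroup.zpowers x = ⊤) :
    (commutatorHom A x).ker = (Subgroup.center G).subgroupOf A := by
  ext a
  rw [MonoidHom.mem_ker, Subgroup.mem_subgroupOf, ← Subtype.coe_inj, coe_commutatorHom_apply,
    OneMemClass.coe_one, commutatorElement_eq_one_iff_commute]
  refine ⟨fun hxa ↦ ?_, fun ha ↦ Subgroup.mem_center_iff.mp ha x⟩
  have hle : A ⊔ Subgroup.zpowers x ≤ Subgroup.centralizer {(a : G)} := by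
    refine sup_le (fun b hb ↦ Subgroup.mem_centralizer_singleton_iff.mpr ?_) ?_
    · exact setLike_mul_comm hb a.2
    · exact Subgroup.zpowers_le.mpr (Subgroup.mem_centralizer_singleton_iff.mpr hxa.eq)
  rw [hx] at hle
  exact Subgroup.mem_center_iff.mpr fun g ↦
    Subgroup.mem_centralizer_singleton_iff.mp (hle (Subgroup.mem_top g))

theorem normal_map_range_commutatorHom (hx : A ⊔ Subgroup.zpowers x = ⊤) :
    ((commutatorHom A x).range.map A.subtype).Normal := by
  rw [← Subgroup.normalizer_eq_top_iff, eq_top_iff, ← hx, sup_le_iff, Subgroup.zpowers_le]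
  constructor
  · refine le_trans ?_ (Subgroup.centralizer_le_normalizer _)
    rw [Subgroup.le_centralizer_iff]
    exact (Subgroup.map_subtype_le _).trans (Subgroup.le_centralizer A)
  · refine Subgroup.mem_normalizer_iff.mpr fun g ↦ ?_
    rw [mem_map_range_commutatorHom, mem_map_range_commutatorHom]
    constructor
    · rintro ⟨a, ha, rfl⟩
      refine ⟨x * a * x⁻¹, Subgroup.Normal.conj_mem ‹_› a ha x, ?_⟩
      simp only [commutatorElement_def]
      group
    · rintro ⟨a, ha, hg⟩
      refine ⟨x⁻¹ * a * x, by simpa using Subgroup.Normal.conj_mem ‹_› a ha x⁻¹, ?_⟩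
      rw [show g = x⁻¹ * (x * g * x⁻¹) * x by group, ← hg]
      simp only [commutatorElement_def]
      group

theorem map_range_commutatorHom (hx : A ⊔ Subgroup.zpowers x = ⊤) :
    (commutatorHom A x).range.map A.subtype = commutator G := by
  have := normal_map_range_commutatorHom hx
  refine le_antisymm ?_ (commutator_le_of_sup_zpowers_eq_top_s6 hx fun a ha ↦
    (mem_map_range_commutatorHom A x).mpr ⟨a, ha, rfl⟩)
  rintro _ ⟨_, ⟨a, rfl⟩, rfl⟩
  rw [Subgroup.subtype_apply, coe_commutatorHom_apply]
  exact Subgroup.commutator_mem_commutator (Subgroup.mem_top x) (Subgroup.mem_top _)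

theorem card_center_mul_card_commutator [Finite G] (hx : A ⊔ Subgroup.zpowers x = ⊤)
    (hZ : Subgroup.center G ≤ A) :
    Nat.card (Subgroup.center G) * Nat.card (commutator G) = Nat.card A := by
  rw [← (commutatorHom A x).ker.card_mul_index, Subgroup.index_ker, ker_commutatorHom hx,
    ← map_range_commutatorHom hx, Subgroup.card_map_of_injective A.subtype_injective,
    Nat.card_congr (Subgroup.subgroupOfEquivOfLe hZ).toEquiv]

end CommutatorHom

end

theorem nilpotencyClass_eq_of_index_commutator_eq_sq_s6 {p : ℕ} [hp : Fact p.Prime] (n : ℕ)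
    {Q : Type*} [Group Q] [Finite Q] (hcard : Nat.card Q = p ^ (n + 2))
    (hidx : (commutator Q).index = p ^ 2) (A : Subgroup Q) [A.Normal] [IsMulCommutative A]
    (hA : A.index = p) : Group.nilpotencyClass Q = n + 1 := by
  induction n generalizing Q with
  | zero =>
    have := (IsPGroup.of_card hcard).isNilpotent
    have := (IsPGroup.of_card hcard).nontrivial_iff_card.mpr ⟨2, two_pos, hcard⟩
    have hG' : commutator Q = ⊥ := Subgroup.card_eq_one.mp
      (card_eq_pow_of_index_eq_pow (k := 0) _ hp.out.pos (by rwa [zero_add]) hidx)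
    have hle := Group.IsNilpotent.nilpotencyClass_le_one_iff.mpr ((commutator_eq_bot_iff Q).mp hG')
    have hne := mt Group.nilpotencyClass_zero_iff_subsingleton.mp (not_subsingleton Q)
    omega
  | succ n ih =>
    have := (IsPGroup.of_card hcard).isNilpotent
    have := (IsPGroup.of_card hcard).nontrivial_iff_card.mpr ⟨n + 3, by omega, hcard⟩
    have hcardG' := card_eq_pow_of_index_eq_pow _ hp.out.pos hcard hidx
    have hcardA :=
      card_eq_pow_of_index_eq_pow (j := 1) _ hp.out.pos hcard (hA.trans (pow_one p).symm)
    have hne : commutator Q ≠ ⊥ := by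
      rw [Ne, ← Subgroup.card_eq_one, hcardG']
      exact (Nat.one_lt_pow n.succ_ne_zero hp.out.one_lt).ne'
    obtain ⟨x, hx⟩ : ∃ x, x ∉ A := by
      by_contra! h
      rw [(Subgroup.eq_top_iff' A).mpr h, Subgroup.index_top] at hA
      exact hp.out.one_lt.ne hA
    have hZA := center_le_of_commutator_ne_bot (hA ▸ hp.out) hne
    have hZ : Nat.card (Subgroup.center Q) = p := by
      have := card_center_mul_card_commutator (sup_zpowers_eq_top_of_notMem (hA ▸ hp.out) hx) hZA
      rw [hcardG', hcardA, pow_succ' p (n + 1)] at this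
      exact Nat.eq_of_mul_eq_mul_right (pow_pos hp.out.pos _) this
    have hZG' := center_le_commutator_of_card_center_eq_prime hp.out hZ hne
    have := (‹A.Normal›).map _ (QuotientGroup.mk'_surjective (Subgroup.center Q))
    rw [Group.nilpotencyClass_eq_quotient_center_plus_one,
      ih ?_ ((index_commutator_quotient hZG').trans hidx) (A.map (QuotientGroup.mk' _)) ?_]
    · exact index_eq_pow_of_card_eq_pow _ hp.out.pos (k := 1) (by rw [hcard]; ring_nf)
        (hZ.trans (pow_one p).symm)
    · rwa [Subgroup.index_map_eq _ (QuotientGroup.mk'_surjective _)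
        (by rwa [QuotientGroup.ker_mk'])]

/-- Let `G` be a finite `p`-group with `|G| ≥ p^3` and `|G : G'| = p^2`, and let `H` be a
maximal (hence normal) subgroup of `G`. Then `G/H'` is a `p`-group of maximal class. -/
theorem stmt6 (p : ℕ) [Fact p.Prime] (G : Type*) [Group G] [Finite G]
    (hG : IsPGroup p G) (hcard : p ^ 3 ≤ Nat.card G)
    (hidx : (commutator G).index = p ^ 2)
    (H : Subgroup G) (hH : H.index = p) (hHn : H.Normal) :
    ∃ m : ℕ, 3 ≤ m ∧ Nat.card (G ⧸ (⁅H, H⁆ : Subgroup G)) = p ^ m ∧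
      Group.nilpotencyClass (G ⧸ (⁅H, H⁆ : Subgroup G)) = m - 1 := by
  have hp : p.Prime := Fact.out
  have := hG.isNilpotent
  have hG' : commutator G ≠ ⊥ := by
    rintro h
    rw [h, Subgroup.index_bot] at hidx
    exact absurd (hidx ▸ hcard) (Nat.not_le.mpr (Nat.pow_lt_pow_right hp.one_lt (by norm_num)))
  have hQ' : commutator (G ⧸ ⁅H, H⁆) ≠ ⊥ := by
    rw [← map_mk'_commutator, Ne, Subgroup.map_eq_bot_iff, QuotientGroup.ker_mk']
    exact fun h ↦ hG' (eq_bot_of_le_commutator_top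
      (h.trans (commutator_self_le_commutator_commutator_top hidx hH)))
  have hidxQ := (index_commutator_quotient (N := ⁅H, H⁆)
    (Subgroup.commutator_mono le_top le_top)).trans hidx
  obtain ⟨m, hm⟩ := IsPGroup.iff_card.mp (hG.to_quotient ⁅H, H⁆)
  obtain ⟨n, rfl⟩ := Nat.exists_eq_add_of_le' (two_lt_of_card_eq_pow hp.one_lt hm hidxQ hQ')
  have := isMulCommutative_map_mk'_commutator H
  refine ⟨n + 3, by omega, hm, ?_⟩
  rw [nilpotencyClass_eq_of_index_commutator_eq_sq_s6 (n + 1) hm hidxQ (H.map (QuotientGroup.mk' _))]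
  · rfl
  · rwa [Subgroup.index_map_eq _ (QuotientGroup.mk'_surjective _)
      (by rw [QuotientGroup.ker_mk']; exact Subgroup.commutator_le_self H)]
end

section
/- The nonabelian group of order p^3 and exponent p^2 (p odd) is incapable: there is no group H with H/Z(H) isomorphic to it. -/
/-!
Write `K = ⟨a, b⟩` with `a` of order `p²`, `b⁻¹ a b = a ^ (1 + p m)` and `b ^ p ∈ ⟨a⟩`. If
`K ≅ H / Z(H)`, lift `a, b` to `A, B ∈ H` and put `C = A⁻¹ B⁻¹ A B`. Modulo `Z(H)` we have
`C ≡ A ^ (p m)`, so `C` commutes with `A` and `B⁻¹ C B = C ^ r` with `r = 1 + p m`. Since `B ^ p`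
lies in `⟨A⟩ Z(H)` it fixes `A`, and conjugating `p` times by `B` gives
`C ^ (1 + r + ⋯ + r ^ (p - 1)) = 1`. For odd `p` this exponent is `≡ p` modulo `p²`, and
`C ^ (p²) = 1` because `A ^ (p²)` is central; hence `C ^ p = 1`, so `B` fixes `C`, `C` is central,
and `a` commutes with `b`, contradicting that `K` is nonabelian.
-/

open Subgroup Finset

section Conjugation

variable {G : Type*} [Group G]

lemma inv_mul_pow_mul (b x : G) (n : ℕ) : b⁻¹ * x ^ n * b = (b⁻¹ * x * b) ^ n := by
  simpa using (conj_pow (a := b⁻¹) (b := x) (i := n)).symm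

lemma conj_pow_eq_pow_pow {a b : G} {j : ℕ} (h : b⁻¹ * a * b = a ^ j) (n : ℕ) :
    (b ^ n)⁻¹ * a * b ^ n = a ^ j ^ n := by
  induction n with
  | zero => simp
  | succ n ih =>
    calc (b ^ (n + 1))⁻¹ * a * b ^ (n + 1) = b⁻¹ * ((b ^ n)⁻¹ * a * b ^ n) * b := by group
      _ = a ^ j ^ (n + 1) := by rw [ih, inv_mul_pow_mul, h, ← pow_mul, pow_succ']

lemma conj_pow_eq_mul_pow_geom_sum {A B C : G} {r : ℕ}
    (hA : B⁻¹ * A * B = A * C) (hC : B⁻¹ * C * B = C ^ r) (n : ℕ) :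
    (B ^ n)⁻¹ * A * B ^ n = A * C ^ (∑ k ∈ range n, r ^ k) := by
  induction n with
  | zero => simp
  | succ n ih =>
    calc (B ^ (n + 1))⁻¹ * A * B ^ (n + 1) = B⁻¹ * ((B ^ n)⁻¹ * A * B ^ n) * B := by group
      _ = (B⁻¹ * A * B) * (B⁻¹ * C * B) ^ (∑ k ∈ range n, r ^ k) := by
        rw [ih, ← inv_mul_pow_mul]; group
      _ = A * C ^ (∑ k ∈ range (n + 1), r ^ k) := by
        rw [hA, hC, ← pow_mul, mul_assoc, ← pow_succ', geom_sum_succ]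

end Conjugation

lemma geom_sum_one_add_mul_modEq {p : ℕ} (hp : Odd p) (m : ℕ) :
    ∑ k ∈ range p, (1 + p * m) ^ k ≡ p [MOD p ^ 2] := by
  rw [← ZMod.natCast_eq_natCast_iff]
  have hp2 : (p : ZMod (p ^ 2)) ^ 2 = 0 := by exact_mod_cast ZMod.natCast_self (p ^ 2)
  have hpow (k : ℕ) : (1 + p * m : ZMod (p ^ 2)) ^ k = 1 + k * p * m := by
    induction k with
    | zero => simp
    | succ k ih =>
      rw [pow_succ _ k, ih]; push_cast; linear_combination (k * m ^ 2 : ZMod (p ^ 2)) * hp2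
  obtain ⟨e, he⟩ : p ∣ ∑ k ∈ range p, k := by
    obtain ⟨e, rfl⟩ := hp
    refine ⟨e, Nat.eq_of_mul_eq_mul_right two_pos ?_⟩
    rw [sum_range_id_mul_two, Nat.add_sub_cancel]; ring
  push_cast
  simp_rw [hpow, sum_add_distrib, ← sum_mul]
  have he' : ∑ k ∈ range p, (k : ZMod (p ^ 2)) = p * e := by
    rw [← Nat.cast_sum, he, Nat.cast_mul]
  simp only [sum_const, card_range, nsmul_eq_mul, mul_one, he']
  linear_combination (e * m : ZMod (p ^ 2)) * hp2

section Center

variable {G : Type*} [Group G]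

lemma mem_center_of_forall_commute {S : Set G} {c : G} (hS : closure S ⊔ center G = ⊤)
    (hc : ∀ s ∈ S, Commute s c) : c ∈ center G := by
  have hcent : centralizer {c} = ⊤ := by
    refine top_le_iff.mp (hS ▸ sup_le ((closure_le _).mpr fun s hs => ?_) fun g hg => ?_)
    · exact mem_centralizer_singleton_iff.mpr (hc s hs)
    · exact mem_centralizer_singleton_iff.mpr (mem_center_iff.mp hg c).symm
  simpa using centralizer_eq_top_iff_subset.mp hcent

lemma forall_commute_of_closure_pair_eq_top {a b : G} (hgen : closure {a, b} = ⊤)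
    (hab : Commute a b) (x y : G) : Commute x y := by
  have hS : closure {a, b} ⊔ center G = ⊤ := by rw [hgen, top_sup_eq]
  have hcenter : center G = ⊤ := top_le_iff.mp <| hgen ▸ (closure_le _).mpr <| by
    rintro s (rfl | rfl)
    · exact mem_center_of_forall_commute hS (by rintro t (rfl | rfl); exacts [.refl _, hab.symm])
    · exact mem_center_of_forall_commute hS (by rintro t (rfl | rfl); exacts [hab, .refl _])
  exact (mem_center_iff.mp (hcenter ▸ mem_top x) y).symm

end Center

section Lifting

variable {H : Type*} [Group H] {A B C : H} {p m : ℕ}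

lemma pow_eq_one_of_conj_eq_mul_of_odd (hp : Odd p) (hAC : Commute A C)
    (hA : B⁻¹ * A * B = A * C) (hC : B⁻¹ * C * B = C ^ (1 + p * m))
    (hBp : Commute A (B ^ p)) (hAp : Commute (A ^ p ^ 2) B) : C ^ p = 1 := by
  have hCp2 : C ^ p ^ 2 = 1 := by
    have h := inv_mul_pow_mul B A (p ^ 2)
    rw [hA, hAC.mul_pow, mul_assoc, hAp.symm.inv_mul_cancel_assoc] at h
    exact mul_eq_left.mp h.symm
  have hCE : C ^ (∑ k ∈ range p, (1 + p * m) ^ k) = 1 := by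
    have h := conj_pow_eq_mul_pow_geom_sum hA hC p
    rw [mul_assoc, hBp.symm.inv_mul_cancel_assoc] at h
    exact mul_eq_left.mp h.symm
  rw [← hCE, pow_eq_pow_iff_modEq]
  exact ((geom_sum_one_add_mul_modEq hp m).of_dvd (orderOf_dvd_of_pow_eq_one hCp2)).symm

theorem commutator_mem_center_of_conj_eq_pow_one_add_mul (hp : Odd p)
    (hgen : closure {A, B} ⊔ center H = ⊤)
    (hAB : (A ^ (1 + p * m))⁻¹ * (B⁻¹ * A * B) ∈ center H)
    (hBp : Commute A (B ^ p)) (hAp : Commute (A ^ p ^ 2) B) :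
    A⁻¹ * (B⁻¹ * A * B) ∈ center H := by
  set z := (A ^ (1 + p * m))⁻¹ * (B⁻¹ * A * B)
  set C := A⁻¹ * (B⁻¹ * A * B)
  have hz (g : H) : Commute g z := mem_center_iff.mp hAB g
  have hCz : C = A ^ (p * m) * z := by simp only [C, z]; group
  have hA : B⁻¹ * A * B = A * C := by simp only [C]; group
  have hAC : Commute A C := hCz ▸ ((Commute.refl A).pow_right _).mul_right (hz A)
  have hC : B⁻¹ * C * B = C ^ (1 + p * m) :=
    calc B⁻¹ * C * B = B⁻¹ * A ^ (p * m) * B * (B⁻¹ * z * B) := by rw [hCz]; group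
      _ = A ^ (p * m) * C ^ (p * m) * z := by
        rw [inv_mul_pow_mul, hA, hAC.mul_pow, mul_assoc B⁻¹, (hz B).inv_mul_cancel_assoc]
      _ = C ^ (1 + p * m) := by
        rw [(hAC.pow_pow _ _).eq, mul_assoc, ← hCz, ← pow_succ, add_comm]
  have hCp := pow_eq_one_of_conj_eq_mul_of_odd hp hAC hA hC hBp hAp
  have hBC : Commute B C := by
    rw [pow_add, pow_mul, hCp, one_pow, pow_one, mul_one, mul_assoc] at hC
    exact (inv_mul_eq_iff_eq_mul.mp hC).symm
  exact mem_center_of_forall_commute hgen (by rintro s (rfl | rfl); exacts [hAC, hBC])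

end Lifting

section Hom

variable {G K : Type*} [Group G] [Group K] (f : G →* K)

lemma closure_sup_ker_eq_top {S : Set G} (hS : closure (f '' S) = ⊤) :
    closure S ⊔ f.ker = ⊤ := by
  rw [← comap_map_eq, MonoidHom.map_closure, hS, comap_top]

lemma commute_of_map_mem_zpowers (hf : f.ker ≤ center G) {x y : G}
    (h : f x ∈ zpowers (f y)) : Commute x y := by
  obtain ⟨k, hk⟩ := mem_zpowers_iff.mp h
  have hz : (y ^ k)⁻¹ * x ∈ center G := hf <| f.eq_iff.mp (by rw [map_zpow, hk])
  rw [← mul_inv_cancel_left (y ^ k) x]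
  exact ((Commute.refl y).zpow_left k).mul_left (mem_center_iff.mp hz y).symm

end Hom

section PrimeCube

variable {K : Type*} [Group K]

lemma eq_top_of_lt_of_index_prime {S T : Subgroup K} (hST : S < T) (hprime : S.index.Prime) :
    T = ⊤ := by
  have h := relIndex_mul_index hST.le
  rcases (Nat.dvd_prime hprime).mp (index_dvd_of_le hST.le) with hT | hT
  · exact index_eq_one.mp hT
  · rw [hT, mul_eq_right₀ hprime.ne_zero, relIndex_eq_one] at h
    exact absurd h hST.not_ge

variable [Finite K]

lemma exists_conj_eq_pow_one_add_mul {a b : K} {p : ℕ} (hp : p.Prime) (ha : orderOf a = p ^ 2)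
    (hconj : b⁻¹ * a * b ∈ zpowers a) (hbp : b ^ p ∈ zpowers a) :
    ∃ m : ℕ, b⁻¹ * a * b = a ^ (1 + p * m) := by
  have := Fact.mk hp
  obtain ⟨j, hj⟩ := mem_powers_iff_mem_zpowers.mpr hconj
  obtain ⟨k, hk⟩ := mem_zpowers_iff.mp hbp
  have hfix : a ^ j ^ p = a ^ 1 := by
    rw [← conj_pow_eq_pow_pow hj.symm p, ← hk, mul_assoc,
      ((Commute.refl a).zpow_left k).inv_mul_cancel_assoc, pow_one]
  have hjp : j ^ p ≡ 1 [MOD p] :=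
    (ha ▸ pow_eq_pow_iff_modEq.mp hfix).of_dvd (dvd_pow_self p two_ne_zero)
  have hj1 : j % p = 1 % p := by
    rw [← ZMod.natCast_eq_natCast_iff, Nat.cast_pow, ZMod.pow_card] at hjp
    exact (ZMod.natCast_eq_natCast_iff' _ _ _).mp hjp
  refine ⟨j / p, ?_⟩
  rw [← hj, add_comm, ← Nat.mod_eq_of_lt hp.one_lt, ← hj1, Nat.div_add_mod]

theorem exists_generators_of_card_eq_prime_pow_three {p : ℕ} (hp : p.Prime)
    (hcard : Nat.card K = p ^ 3) (hexp : Monoid.exponent K = p ^ 2) :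
    ∃ (a b : K) (m : ℕ), closure {a, b} = ⊤ ∧ b⁻¹ * a * b = a ^ (1 + p * m) ∧
      b ^ p ∈ zpowers a := by
  obtain ⟨a, ha⟩ : ∃ a : K, orderOf a = p ^ 2 := by
    simpa [hexp, hp.factorization_pow] using hp.exists_orderOf_eq_pow_factorization_exponent K
  have hindex : (zpowers a).index = p := by
    have h := (zpowers a).card_mul_index
    rw [Nat.card_zpowers, ha, hcard, pow_succ] at h
    exact Nat.eq_of_mul_eq_mul_left (pow_pos hp.pos 2) h
  have : (zpowers a).Normal :=
    normal_of_index_eq_minFac_card (by rw [hindex, hcard, hp.pow_minFac three_ne_zero])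
  obtain ⟨b, hb⟩ : ∃ b, b ∉ zpowers a := by
    by_contra! h
    have := index_eq_one.mpr ((eq_top_iff' _).mpr h)
    exact hp.one_lt.ne' (hindex ▸ this)
  have hbp : b ^ p ∈ zpowers a := hindex ▸ (zpowers a).pow_index_mem b
  obtain ⟨m, hm⟩ := exists_conj_eq_pow_one_add_mul hp ha
    (by simpa using Normal.conj_mem ‹_› a (mem_zpowers a) b⁻¹) hbp
  have hlt : zpowers a < closure {a, b} := SetLike.lt_iff_le_and_exists.mpr
    ⟨zpowers_le.mpr (subset_closure (by simp)), b, subset_closure (by simp), hb⟩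
  exact ⟨a, b, m, eq_top_of_lt_of_index_prime hlt (hindex ▸ hp), hm, hbp⟩

end PrimeCube

/-- For `p` an odd prime, the nonabelian group of order `p^3` and exponent `p^2` is
incapable: there is no group `H` with `H/Z(H)` isomorphic to it. -/
theorem stmt11 (p : ℕ) [Fact p.Prime] (hodd : Odd p) (K : Type) [Group K] [Finite K]
    (hcard : Nat.card K = p ^ 3) (hexp : Monoid.exponent K = p ^ 2)
    (hnab : ¬ ∀ a b : K, a * b = b * a) :
    ¬ ∃ (H : Type) (_ : Group H), Nonempty ((H ⧸ Subgroup.center H) ≃* K) := by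
  rintro ⟨H, _, ⟨φ⟩⟩
  obtain ⟨a, b, m, hgen, hab, hbp⟩ :=
    exists_generators_of_card_eq_prime_pow_three Fact.out hcard hexp
  let f : H →* K := φ.toMonoidHom.comp (QuotientGroup.mk' (center H))
  have hf : f.ker = center H := by ext; simp [f]
  have hfs : Function.Surjective f := φ.surjective.comp (QuotientGroup.mk'_surjective _)
  obtain ⟨A, rfl⟩ := hfs a
  obtain ⟨B, rfl⟩ := hfs b
  have hC := commutator_mem_center_of_conj_eq_pow_one_add_mul hodd (A := A) (B := B) (m := m)
    (hf ▸ closure_sup_ker_eq_top f (by rwa [Set.image_pair]))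
    (hf ▸ f.eq_iff.mp (by simpa using hab))
    (commute_of_map_mem_zpowers f hf.le (x := B ^ p) (by rwa [map_pow])).symm
    (commute_of_map_mem_zpowers f hf.le (x := A ^ p ^ 2) (y := B)
      (by rw [map_pow, ← hexp, Monoid.pow_exponent_eq_one]; exact one_mem _))
  have hcomm : f (B⁻¹ * A * B) = f A := f.eq_iff.mpr (hf ▸ hC)
  rw [map_mul, map_mul, map_inv, mul_assoc, inv_mul_eq_iff_eq_mul] at hcomm
  exact hnab (forall_commute_of_closure_pair_eq_top hgen hcomm)
end

section
/- Let G be a finite p-group of order at least p^5 with |G : G'| ≤ p^3. Suppose H is a maximal subgroup of G all of whose irreducible complex characters have degree 1 or are absent of degree p (i.e. H has no irreducible character of degree p). Then every other maximal subgroup M of G satisfies |M : M'| ≤ |G : G'|. -/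
/-!
Both `H` and `M` are normal of index `p`. Suppose `⁅H, H⁆ ≰ ⁅M, M⁆`. Then `K = M ∩ H` is a normal
subgroup of index `p` of `H` with `H' ≰ K'`, and some linear character `χ` of `K` is not
`H`-invariant (otherwise `K / K'` would be central in `H / K'` with cyclic quotient, making
`H / K'` abelian). Its inertia group is then `K`, so the representation of `H` coinduced from `χ`
is irreducible of degree `p`, which the hypothesis forbids. Hence `H' ≤ M'`, and `H / M'`, `M / M'`
are distinct abelian maximal subgroups of `G / M'`. Their intersection is central and contains the
derived subgroup, so commutators are bilinear; for `a ∈ H \ M` every commutator is then a value of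
the homomorphism `y ↦ ⁅a, y⁆`, whose kernel contains `H`. So `|G' : M'| ≤ p`, and
`|M : M'| = |M : G'| |G' : M'| ≤ p |M : G'| = |G : G'|`.
-/

open scoped commutatorElement

universe u

section PrimeIndex

variable {G : Type*} [Group G]

lemma Subgroup.isCoatom_of_index_prime {K : Subgroup G} (hK : K.index.Prime) : IsCoatom K := by
  refine ⟨fun h => by simp [h, Nat.not_prime_one] at hK, fun L hKL => ?_⟩
  have hmul := Subgroup.relIndex_mul_index hKL.le
  rcases hK.eq_one_or_self_of_dvd _ (Subgroup.index_dvd_of_le hKL.le) with h | h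
  · exact Subgroup.index_eq_one.1 h
  · rw [h, Nat.mul_eq_right hK.ne_zero, Subgroup.relIndex_eq_one] at hmul
    exact absurd hmul hKL.not_ge

lemma Subgroup.relIndex_eq_index_of_ne {H M : Subgroup G} [M.Normal] (hH : H.index.Prime)
    (hM : M.index.Prime) (hMH : M ≠ H) : M.relIndex H = M.index := by
  refine (hM.eq_one_or_self_of_dvd _ (Subgroup.relIndex_dvd_index_of_normal M H)).resolve_left
    fun h => hMH ?_
  exact ((Subgroup.isCoatom_of_index_prime hH).le_iff_eq
    (Subgroup.isCoatom_of_index_prime hM).ne_top).1 (Subgroup.relIndex_eq_one.1 h)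

lemma Subgroup.commutator_le_of_index_prime {K : Subgroup G} [K.Normal] (hK : K.index.Prime) :
    _root_.commutator G ≤ K := by
  have : IsCyclic (G ⧸ K) := isCyclic_of_prime_card (hp := ⟨hK⟩) rfl
  exact Subgroup.Normal.quotient_commutative_iff_commutator_le.1 inferInstance

lemma Subgroup.exists_zpow_mul_eq_of_index_prime {B : Subgroup G} [B.Normal]
    (hB : B.index.Prime) {a : G} (ha : a ∉ B) (x : G) : ∃ n : ℤ, ∃ w ∈ B, a ^ n * w = x := by
  have ha' : (a : G ⧸ B) ≠ 1 := by rwa [Ne, QuotientGroup.eq_one_iff]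
  obtain ⟨n, hn⟩ := Subgroup.mem_zpowers_iff.1
    (mem_zpowers_of_prime_card (hp := ⟨hB⟩) (g' := (x : G ⧸ B)) rfl ha')
  refine ⟨n, (a ^ n)⁻¹ * x, ?_, mul_inv_cancel_left _ _⟩
  rw [← QuotientGroup.eq, QuotientGroup.mk_zpow, hn]

lemma IsPGroup.normal_of_index_eq_s13 {p : ℕ} [Fact p.Prime] [Finite G] (hG : IsPGroup p G)
    {H : Subgroup G} (hH : H.index = p) : H.Normal := by
  have hp : p.Prime := Fact.out
  obtain ⟨n, hn⟩ := IsPGroup.iff_card.1 hG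
  have hn0 : n ≠ 0 := by
    rintro rfl
    have := H.index_dvd_card
    rw [hH, hn, pow_zero, Nat.dvd_one] at this
    exact hp.one_lt.ne' this
  exact Subgroup.normal_of_index_eq_minFac_card (by rw [hH, hn, hp.pow_minFac hn0])

end PrimeIndex

section CentralCommutators

variable {G : Type*} [Group G] (hG : commutator G ≤ Subgroup.center G)
include hG

lemma commutatorElement_mul_left_of_le_center (x y z : G) : ⁅x * y, z⁆ = ⁅x, z⁆ * ⁅y, z⁆ := by
  have hc := Subgroup.mem_center_iff.1
    (hG (Subgroup.commutator_mem_commutator (Subgroup.mem_top y) (Subgroup.mem_top z)))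
  rw [commutatorElement_mul_left_eq_conj_mul, hc x, mul_inv_cancel_right]
  exact (hc _).symm

lemma commutatorElement_mul_right_of_le_center (x y z : G) : ⁅x, y * z⁆ = ⁅x, y⁆ * ⁅x, z⁆ := by
  have hc := Subgroup.mem_center_iff.1
    (hG (Subgroup.commutator_mem_commutator (Subgroup.mem_top x) (Subgroup.mem_top z)))
  rw [commutatorElement_mul_right_eq_mul_conj, mul_assoc _ y, hc y, ← mul_assoc,
    mul_inv_cancel_right]

def commutatorLeftHom (y : G) : G →* G :=
  MonoidHom.mk' (⁅·, y⁆) fun x x' => commutatorElement_mul_left_of_le_center hG x x' y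

def commutatorRightHom (x : G) : G →* G :=
  MonoidHom.mk' (⁅x, ·⁆) fun y y' => commutatorElement_mul_right_of_le_center hG x y y'

lemma commutatorElement_zpow_left (x y : G) (n : ℤ) : ⁅x ^ n, y⁆ = ⁅x, y⁆ ^ n :=
  map_zpow (commutatorLeftHom hG y) x n

lemma commutatorElement_zpow_right (x y : G) (n : ℤ) : ⁅x, y ^ n⁆ = ⁅x, y⁆ ^ n :=
  map_zpow (commutatorRightHom hG x) y n

end CentralCommutators

section TwoAbelianMaximalSubgroups

variable {G : Type*} [Group G]

lemma commutatorElement_eq_one_of_commutator_eq_bot {A : Subgroup G} (hA : ⁅A, A⁆ = ⊥) {x y : G}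
    (hx : x ∈ A) (hy : y ∈ A) : ⁅x, y⁆ = 1 := by
  simpa [hA] using Subgroup.commutator_mem_commutator hx hy

theorem card_commutator_le_index_of_ne [Finite G] {A B : Subgroup G} [A.Normal] [B.Normal]
    (hA : A.index.Prime) (hB : B.index.Prime) (hAB : A ≠ B) (hAc : ⁅A, A⁆ = ⊥)
    (hBc : ⁅B, B⁆ = ⊥) : Nat.card (commutator G) ≤ A.index := by
  have hA' := Subgroup.isCoatom_of_index_prime hA
  have hB' := Subgroup.isCoatom_of_index_prime hB
  have hZ : A ⊓ B ≤ Subgroup.center G := by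
    have : A ⊔ B ≤ Subgroup.centralizer (A ⊓ B : Set G) := sup_le
      ((Subgroup.commutator_eq_bot_iff_le_centralizer.1 hAc).trans
        (Subgroup.centralizer_le inf_le_left))
      ((Subgroup.commutator_eq_bot_iff_le_centralizer.1 hBc).trans
        (Subgroup.centralizer_le inf_le_right))
    rwa [hA'.sup_eq_top_of_ne hB' hAB, top_le_iff, Subgroup.centralizer_eq_top_iff_subset] at this
  have hcent : commutator G ≤ Subgroup.center G :=
    (le_inf (Subgroup.commutator_le_of_index_prime hA)
      (Subgroup.commutator_le_of_index_prime hB)).trans hZ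
  obtain ⟨a, haA, haB⟩ : ∃ a ∈ A, a ∉ B :=
    SetLike.not_le_iff_exists.1 fun h => hAB ((hA'.le_iff_eq hB'.ne_top).1 h).symm
  let φ := commutatorRightHom hcent a
  have hker : A ≤ φ.ker := fun y hy => commutatorElement_eq_one_of_commutator_eq_bot hAc haA hy
  have hrange : commutator G ≤ φ.range := by
    rw [commutator_def, Subgroup.commutator_le]
    rintro x - y -
    obtain ⟨m, w, hw, rfl⟩ := Subgroup.exists_zpow_mul_eq_of_index_prime hB haB x
    obtain ⟨n, w', hw', rfl⟩ := Subgroup.exists_zpow_mul_eq_of_index_prime hB haB y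
    refine ⟨w' ^ m * w ^ (-n), ?_⟩
    simp only [φ, commutatorRightHom, MonoidHom.mk'_apply, map_mul, map_zpow,
      commutatorElement_mul_left_of_le_center hcent, commutatorElement_mul_right_of_le_center hcent,
      commutatorElement_zpow_left hcent, commutatorElement_zpow_right hcent,
      commutatorElement_self, one_zpow, one_mul,
      commutatorElement_eq_one_of_commutator_eq_bot hBc hw hw', mul_one]
    rw [zpow_neg, ← inv_zpow, commutatorElement_inv]
  calc Nat.card (commutator G) ≤ Nat.card φ.range := Subgroup.card_le_of_le hrange
    _ = φ.ker.index := (Subgroup.index_ker φ).symm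
    _ ≤ A.index := Subgroup.index_antitone hker

theorem relIndex_commutator_le_index_of_ne [Finite G] {A B N : Subgroup G} [A.Normal] [B.Normal]
    [N.Normal] (hA : A.index.Prime) (hB : B.index.Prime) (hAB : A ≠ B) (hNA : N ≤ A) (hNB : N ≤ B)
    (hAN : ⁅A, A⁆ ≤ N) (hBN : ⁅B, B⁆ ≤ N) : N.relIndex (commutator G) ≤ A.index := by
  let π := QuotientGroup.mk' N
  have hπ : Function.Surjective π := QuotientGroup.mk'_surjective N
  have hker : π.ker = N := QuotientGroup.ker_mk' N
  have hindex {C : Subgroup G} (hC : N ≤ C) : (C.map π).index = C.index :=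
    Subgroup.index_map_eq _ hπ (hker.symm ▸ hC)
  have habelian {C : Subgroup G} (hC : ⁅C, C⁆ ≤ N) : ⁅C.map π, C.map π⁆ = ⊥ := by
    rw [← Subgroup.map_commutator, Subgroup.map_eq_bot_iff, hker]
    exact hC
  have hne : A.map π ≠ B.map π := fun h => hAB <| by
    rw [← sup_of_le_left hNA, ← sup_of_le_left hNB, ← hker, ← Subgroup.comap_map_eq,
      ← Subgroup.comap_map_eq, h]
  have : (A.map π).Normal := Subgroup.Normal.map inferInstance π hπ
  have : (B.map π).Normal := Subgroup.Normal.map inferInstance π hπ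
  have hcard := card_commutator_le_index_of_ne ((hindex hNA).symm ▸ hA) ((hindex hNB).symm ▸ hB)
    hne (habelian hAN) (habelian hBN)
  rwa [hindex hNA, commutator_def, ← MonoidHom.range_eq_top_of_surjective π hπ,
    ← map_commutator_eq, ← Subgroup.relIndex_ker, hker] at hcard

end TwoAbelianMaximalSubgroups

theorem sum_inv_mul_hom_units {G R : Type*} [Group G] [Fintype G] [Field R] (φ ψ : G →* Rˣ)
    [Decidable (φ = ψ)] : ∑ g, (φ g : R)⁻¹ * ψ g = if φ = ψ then (Fintype.card G : R) else 0 := by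
  split_ifs with h
  · simp [h]
  · have hne : (Units.coeHom R).comp (φ⁻¹ * ψ) ≠ 1 := fun h' => h <| MonoidHom.ext fun g => by
      have : (φ g)⁻¹ * ψ g = 1 := Units.ext (DFunLike.congr_fun h' g)
      rwa [inv_mul_eq_one] at this
    simpa [Units.val_inv_eq_inv_val] using sum_hom_units_eq_zero _ hne

lemma mem_commutator_of_forall_apply_eq_one {K : Type*} [Group K] [Finite K] {x : K}
    (hx : ∀ χ : K →* ℂˣ, χ x = 1) : x ∈ commutator K := by
  rw [← Abelianization.ker_of, MonoidHom.mem_ker]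
  by_contra h
  obtain ⟨ψ, hψ⟩ := CommGroup.exists_apply_ne_one_of_hasEnoughRootsOfUnity (Abelianization K) ℂ h
  exact hψ (hx (ψ.comp Abelianization.of))

lemma commutator_le_of_commutator_top_le {G : Type*} [Group G] {K N : Subgroup G} [K.Normal]
    [N.Normal] [IsCyclic (G ⧸ K)] (hNK : N ≤ K) (hKN : ⁅(⊤ : Subgroup G), K⁆ ≤ N) :
    commutator G ≤ N := by
  rw [← Subgroup.Normal.quotient_commutative_iff_commutator_le]
  refine (QuotientGroup.map N K (MonoidHom.id G) hNK).isMulCommutative_of_isCyclic_of_ker_le_center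
    fun x hx => Subgroup.mem_center_iff.2 fun y => ?_
  obtain ⟨g, rfl⟩ := QuotientGroup.mk_surjective x
  obtain ⟨h, rfl⟩ := QuotientGroup.mk_surjective y
  replace hx : (g : G ⧸ K) = 1 := hx
  rw [QuotientGroup.eq_one_iff] at hx
  rw [← QuotientGroup.mk_mul, ← QuotientGroup.mk_mul, QuotientGroup.eq]
  have := hKN (Subgroup.commutator_mem_commutator (Subgroup.mem_top (g⁻¹ * h⁻¹)) hx)
  simpa [commutatorElement_def, mul_assoc] using this

namespace MonoidHom

variable {Γ M : Type*} [Group Γ] [Monoid M] {K : Subgroup Γ} [K.Normal]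

def inertia (χ : K →* M) : Subgroup Γ where
  carrier := {g | ∀ k, χ (MulAut.conjNormal g k) = χ k}
  mul_mem' {g h} hg hh k := by rw [map_mul, MulAut.mul_apply, hg, hh]
  one_mem' k := by simp
  inv_mem' {g} hg k := by
    rw [← hg, ← MulAut.mul_apply, ← map_mul, mul_inv_cancel, map_one, MulAut.one_apply]

lemma mem_inertia {χ : K →* M} {g : Γ} :
    g ∈ χ.inertia ↔ ∀ k, χ (MulAut.conjNormal g k) = χ k := Iff.rfl

lemma le_inertia {M : Type*} [CommMonoid M] (χ : K →* M) : K ≤ χ.inertia := by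
  intro g hg k
  have : MulAut.conjNormal g k = ⟨g, hg⟩ * k * (⟨g, hg⟩ : K)⁻¹ := Subtype.ext (by simp)
  rw [this, map_mul, map_mul, mul_right_comm, ← map_mul, mul_inv_cancel, map_one, one_mul]

lemma comp_conjNormal_eq_iff (χ : K →* M) (x q : Γ) :
    χ.comp (MulAut.conjNormal x).toMonoidHom = χ.comp (MulAut.conjNormal q).toMonoidHom ↔
      q * x⁻¹ ∈ χ.inertia := by
  simp only [mem_inertia, MonoidHom.ext_iff, coe_comp, MulEquiv.coe_toMonoidHom,
    Function.comp_apply, map_mul, MulAut.mul_apply]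
  constructor
  · intro h k
    rw [← h, ← MulAut.mul_apply, ← map_mul, mul_inv_cancel, map_one, MulAut.one_apply]
  · intro h k
    have : MulAut.conjNormal x⁻¹ (MulAut.conjNormal x k) = k := Subtype.ext (by simp)
    rw [← h, this]

end MonoidHom

theorem exists_inertia_eq_of_not_commutator_le {Γ : Type*} [Group Γ] [Finite Γ] {K : Subgroup Γ}
    [K.Normal] (hK : K.index.Prime) (h : ¬ commutator Γ ≤ ⁅K, K⁆) :
    ∃ χ : K →* ℂˣ, χ.inertia = K := by
  by_contra! hχ
  have hinv (χ : K →* ℂˣ) : χ.inertia = ⊤ :=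
    ((Subgroup.isCoatom_of_index_prime hK).le_iff.1 χ.le_inertia).resolve_right (hχ χ)
  have : IsCyclic (Γ ⧸ K) := isCyclic_of_prime_card (hp := ⟨hK⟩) rfl
  refine h (commutator_le_of_commutator_top_le (Subgroup.commutator_le_self K) ?_)
  rw [Subgroup.commutator_le]
  intro g _ k hk
  have hmem : MulAut.conjNormal g ⟨k, hk⟩ * (⟨k, hk⟩ : K)⁻¹ ∈ commutator K :=
    mem_commutator_of_forall_apply_eq_one fun χ => by
      have hg : g ∈ χ.inertia := (hinv χ).symm ▸ Subgroup.mem_top g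
      rw [map_mul, map_inv, hg, mul_inv_cancel]
  rw [← Subgroup.map_subtype_commutator]
  exact ⟨_, hmem, by simp [commutatorElement_def]⟩

namespace Representation

variable {Γ : Type*} [Group Γ] {K : Subgroup Γ}

def ofCharacter (χ : K →* ℂˣ) : Representation ℂ K ℂ :=
  (Algebra.lsmul ℂ ℂ ℂ).toMonoidHom.comp ((Units.coeHom ℂ).comp χ)

@[simp]
lemma ofCharacter_apply (χ : K →* ℂˣ) (k : K) (z : ℂ) : ofCharacter χ k z = χ k * z := rfl

lemma mem_coindV_ofCharacter {χ : K →* ℂˣ} {f : Γ → ℂ} :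
    f ∈ coindV K.subtype (ofCharacter χ) ↔ ∀ (k : K) (q : Γ), f (k * q) = χ k * f q := Iff.rfl

open Classical in
noncomputable def extendChar (χ : K →* ℂˣ) (q : Γ) : ℂ :=
  if h : q ∈ K then (χ ⟨q, h⟩ : ℂ) else 0

lemma extendChar_of_mem (χ : K →* ℂˣ) (k : K) : extendChar χ k = χ k := by
  simp [extendChar]

lemma extendChar_mul (χ : K →* ℂˣ) (k : K) (q : Γ) :
    extendChar χ (k * q) = χ k * extendChar χ q := by
  by_cases h : q ∈ K
  · have := extendChar_of_mem χ (k * ⟨q, h⟩)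
    rw [map_mul, Units.val_mul, ← extendChar_of_mem χ ⟨q, h⟩] at this
    exact this
  · have h' : (k : Γ) * q ∉ K := fun h' => h (by simpa using K.mul_mem (K.inv_mem k.2) h')
    simp [extendChar, h, h']

/-- Supported on the coset `K * x⁻¹`; as `x⁻¹` runs over coset representatives these functions
form a basis of the coinduced representation. -/
noncomputable def coindBasis (χ : K →* ℂˣ) (x : Γ) : coindV K.subtype (ofCharacter χ) :=
  ⟨fun q => extendChar χ (q * x), fun k q => by simp [mul_assoc, extendChar_mul]⟩

variable {χ : K →* ℂˣ}

@[simp]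
lemma coind_apply_coe (g : Γ) (f : coindV K.subtype (ofCharacter χ)) (q : Γ) :
    (coind K.subtype (ofCharacter χ) g f).1 q = f.1 (q * g) := rfl

lemma coind_coindBasis (g x : Γ) :
    coind K.subtype (ofCharacter χ) g (coindBasis χ x) = coindBasis χ (g * x) := by
  ext q
  rw [coind_apply_coe]
  simp [coindBasis, mul_assoc]

lemma coind_apply_of_mem [K.Normal] (k : K) (f : coindV K.subtype (ofCharacter χ)) (q : Γ) :
    (coind K.subtype (ofCharacter χ) k f).1 q = χ (MulAut.conjNormal q k) * f.1 q := by
  have := f.2 (MulAut.conjNormal q k) q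
  simp only [Subgroup.subtype_apply, MulAut.conjNormal_apply, ofCharacter_apply] at this
  rw [coind_apply_coe, ← this]
  group

noncomputable def evalOut (χ : K →* ℂˣ) : coindV K.subtype (ofCharacter χ) →ₗ[ℂ] (Γ ⧸ K → ℂ) :=
  LinearMap.funLeft ℂ ℂ Quotient.out ∘ₗ (coindV K.subtype (ofCharacter χ)).subtype

@[simp]
lemma evalOut_apply (f : coindV K.subtype (ofCharacter χ)) (x : Γ ⧸ K) :
    evalOut χ f x = f.1 x.out := rfl

lemma evalOut_injective [K.Normal] : Function.Injective (evalOut χ) := by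
  refine (injective_iff_map_eq_zero _).2 fun f hf => Subtype.ext (funext fun q => ?_)
  obtain ⟨k, hk⟩ := QuotientGroup.mk_out_eq_mul K q
  have hc : q * (k : Γ)⁻¹ * q⁻¹ ∈ K := Subgroup.Normal.conj_mem inferInstance _ (K.inv_mem k.2) q
  have hq : q = q * (k : Γ)⁻¹ * q⁻¹ * (q : Γ ⧸ K).out := by rw [hk]; group
  rw [hq, ← Subgroup.coe_mk K _ hc, mem_coindV_ofCharacter.1 f.2, ← evalOut_apply, hf]
  simp

open Classical in
lemma evalOut_coindBasis [K.Normal] (y : Γ ⧸ K) :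
    evalOut χ (coindBasis χ y.out⁻¹) = Pi.single y 1 := by
  ext x
  by_cases hxy : x = y
  · subst hxy
    simpa [coindBasis] using extendChar_of_mem χ 1
  · have : x.out * y.out⁻¹ ∉ K := by
      rw [Subgroup.Normal.mem_comm_iff inferInstance, ← QuotientGroup.eq]
      simpa [eq_comm] using hxy
    simp [coindBasis, extendChar, this, hxy]

lemma evalOut_sum_smul_coindBasis [K.Normal] [Fintype (Γ ⧸ K)] (g : Γ ⧸ K → ℂ) :
    evalOut χ (∑ y, g y • coindBasis χ y.out⁻¹) = g := by
  classical
  simp only [map_sum, map_smul, evalOut_coindBasis, ← Pi.single_smul, smul_eq_mul, mul_one]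
  exact Finset.univ_sum_single g

lemma sum_smul_coindBasis [K.Normal] [Fintype (Γ ⧸ K)] (f : coindV K.subtype (ofCharacter χ)) :
    ∑ y : Γ ⧸ K, f.1 y.out • coindBasis χ y.out⁻¹ = f :=
  evalOut_injective (evalOut_sum_smul_coindBasis _)

lemma finrank_coindV_ofCharacter [K.Normal] [Finite Γ] :
    Module.finrank ℂ (coindV K.subtype (ofCharacter χ)) = K.index := by
  have : Fintype (Γ ⧸ K) := Fintype.ofFinite _
  have hsurj : Function.Surjective (evalOut χ) := fun g => ⟨_, evalOut_sum_smul_coindBasis g⟩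
  rw [(LinearEquiv.ofBijective _ ⟨evalOut_injective, hsurj⟩).finrank_eq,
    Module.finrank_fintype_fun_eq_card, Subgroup.index, Nat.card_eq_fintype_card]

/-- Orthogonality of the conjugates of `χ` projects `f` onto the coset `K * x`: this is where the
hypothesis on the inertia group enters. -/
lemma sum_inv_smul_coind_eq_smul_coindBasis [K.Normal] [Fintype K] (hχ : χ.inertia = K)
    (f : coindV K.subtype (ofCharacter χ)) (x : Γ) :
    ∑ k : K, (χ (MulAut.conjNormal x k) : ℂ)⁻¹ • coind K.subtype (ofCharacter χ) k f =
      ((Fintype.card K : ℂ) * f.1 x) • coindBasis χ x⁻¹ := by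
  classical
  ext q
  have horth := sum_inv_mul_hom_units (χ.comp (MulAut.conjNormal x).toMonoidHom)
    (χ.comp (MulAut.conjNormal q).toMonoidHom)
  simp only [MonoidHom.comp_conjNormal_eq_iff, hχ, MonoidHom.coe_comp, MulEquiv.coe_toMonoidHom,
    Function.comp_apply] at horth
  simp only [Submodule.coe_sum, Finset.sum_apply, Submodule.coe_smul, Pi.smul_apply, smul_eq_mul,
    coind_apply_of_mem, ← mul_assoc, ← Finset.sum_mul, horth]
  split_ifs with h
  · have hq := mem_coindV_ofCharacter.1 f.2 ⟨q * x⁻¹, h⟩ x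
    simp only [inv_mul_cancel_right] at hq
    have hb : (coindBasis χ x⁻¹).1 q = χ ⟨q * x⁻¹, h⟩ := extendChar_of_mem χ ⟨_, h⟩
    rw [hb, hq]
    ring
  · simp [coindBasis, extendChar, h]

lemma coindBasis_ne_zero (x : Γ) : coindBasis χ x ≠ 0 := fun h => by
  have h1 : (coindBasis χ x).1 x⁻¹ = 1 := by simpa [coindBasis] using extendChar_of_mem χ 1
  simp [h] at h1

theorem isIrreducible_coind_ofCharacter [Finite Γ] [K.Normal] (hχ : χ.inertia = K) :
    (coind K.subtype (ofCharacter χ)).IsIrreducible := by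
  have : Fintype K := Fintype.ofFinite K
  have : Fintype (Γ ⧸ K) := Fintype.ofFinite _
  have : Nontrivial (Subrepresentation (coind K.subtype (ofCharacter χ))) :=
    ⟨⊥, ⊤, fun h => coindBasis_ne_zero (χ := χ) 1 <| by
      have : coindBasis χ 1 ∈ (⊤ : Subrepresentation (coind K.subtype (ofCharacter χ))) :=
        Submodule.mem_top
      rwa [← h] at this⟩
  refine ⟨fun W => ?_⟩
  rcases eq_or_ne W ⊥ with hW | hW
  · exact Or.inl hW
  right
  obtain ⟨f, hfW, hf⟩ := Submodule.exists_mem_ne_zero_of_ne_bot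
    (fun h => hW (Subrepresentation.toSubmodule_injective h))
  obtain ⟨x, hx⟩ : ∃ x, f.1 x ≠ 0 := by
    by_contra! h
    exact hf (Subtype.ext (funext h))
  have hbx : coindBasis χ x⁻¹ ∈ W := by
    have hsum := W.toSubmodule.sum_mem (t := Finset.univ) fun k _ =>
      W.toSubmodule.smul_mem (χ (MulAut.conjNormal x k) : ℂ)⁻¹ (W.apply_mem_toSubmodule k hfW)
    rw [sum_inv_smul_coind_eq_smul_coindBasis hχ] at hsum
    have hc : (Fintype.card K : ℂ) * f.1 x ≠ 0 := mul_ne_zero (by simp) hx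
    have := W.toSubmodule.smul_mem ((Fintype.card K : ℂ) * f.1 x)⁻¹ hsum
    rwa [smul_smul, inv_mul_cancel₀ hc, one_smul] at this
  have hb : ∀ y, coindBasis χ y ∈ W := fun y => by
    have := W.apply_mem_toSubmodule (y * x) hbx
    rwa [coind_coindBasis, mul_inv_cancel_right] at this
  refine Subrepresentation.toSubmodule_injective (eq_top_iff.2 fun f _ => ?_)
  rw [← sum_smul_coindBasis f]
  exact W.toSubmodule.sum_mem fun y _ => W.toSubmodule.smul_mem _ (hb _)

end Representation

open CategoryTheory in
theorem FDRep.simple_of_isIrreducible {k G V : Type u} [Field k] [IsAlgClosed k] [Group G]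
    [Finite G] [NeZero (Nat.card G : k)] [AddCommGroup V] [Module k V] [FiniteDimensional k V]
    (ρ : Representation k G V) [ρ.IsIrreducible] : Simple (FDRep.of ρ) := by
  rw [FDRep.simple_iff_end_is_rank_one, ← (FDRep.forget₂HomLinearEquiv _ _).finrank_eq,
    (Rep.homLinearEquiv _ _).finrank_eq]
  exact Representation.IsIrreducible.finrank_intertwiningMap_self ρ

open CategoryTheory Representation in
theorem exists_simple_fdRep_finrank_eq_index {Γ : Type} [Group Γ] [Finite Γ] {K : Subgroup Γ}
    [K.Normal] (hK : K.index.Prime) (h : ¬ commutator Γ ≤ ⁅K, K⁆) :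
    ∃ V : FDRep ℂ Γ, Simple V ∧ Module.finrank ℂ V = K.index := by
  obtain ⟨χ, hχ⟩ := exists_inertia_eq_of_not_commutator_le hK h
  have := isIrreducible_coind_ofCharacter hχ
  exact ⟨FDRep.of (coind K.subtype (ofCharacter χ)), FDRep.simple_of_isIrreducible _,
    finrank_coindV_ofCharacter⟩

theorem commutator_le_commutator_of_forall_finrank_ne {G : Type} [Group G] [Finite G]
    {H M : Subgroup G} [M.Normal] (hMH : (M.relIndex H).Prime)
    (hchar : ∀ V : FDRep ℂ H, CategoryTheory.Simple V → Module.finrank ℂ V ≠ M.relIndex H) :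
    ⁅H, H⁆ ≤ ⁅M, M⁆ := by
  by_contra hHM
  refine (exists_simple_fdRep_finrank_eq_index (K := M.subgroupOf H) hMH fun hle => hHM ?_).elim
    fun V ⟨hV, hdim⟩ => hchar V hV hdim
  calc ⁅H, H⁆ = (commutator H).map H.subtype := (Subgroup.map_subtype_commutator H).symm
    _ ≤ ⁅M.subgroupOf H, M.subgroupOf H⁆.map H.subtype := Subgroup.map_mono hle
    _ = ⁅M ⊓ H, M ⊓ H⁆ := by rw [Subgroup.map_commutator, Subgroup.subgroupOf_map_subtype]
    _ ≤ ⁅M, M⁆ := Subgroup.commutator_mono inf_le_left inf_le_left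

theorem stmt13_general (p : ℕ) [Fact p.Prime] (G : Type) [Group G] [Finite G]
    (hG : IsPGroup p G)
    (H : Subgroup G) (hH : H.index = p)
    (hchar : ∀ (V : FDRep ℂ H), CategoryTheory.Simple V → Module.finrank ℂ V ≠ p) :
    ∀ M : Subgroup G, M.index = p → M ≠ H →
      (⁅M, M⁆ : Subgroup G).relIndex M ≤ (commutator G).index := by
  intro M hM hMH
  have hp : p.Prime := Fact.out
  have := hG.normal_of_index_eq_s13 hH
  have := hG.normal_of_index_eq_s13 hM
  have hrel : M.relIndex H = p :=
    hM ▸ Subgroup.relIndex_eq_index_of_ne (hH ▸ hp) (hM ▸ hp) hMH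
  have hHM : ⁅H, H⁆ ≤ ⁅M, M⁆ :=
    commutator_le_commutator_of_forall_finrank_ne (hrel ▸ hp) (hrel ▸ hchar)
  have hG'M : commutator G ≤ M := Subgroup.commutator_le_of_index_prime (hM ▸ hp)
  have hG'H : commutator G ≤ H := Subgroup.commutator_le_of_index_prime (hH ▸ hp)
  have hMG' : ⁅M, M⁆ ≤ commutator G := Subgroup.commutator_mono le_top le_top
  have hquot : ⁅M, M⁆.relIndex (commutator G) ≤ p := hH ▸
    relIndex_commutator_le_index_of_ne (hH ▸ hp) (hM ▸ hp) hMH.symm (hMG'.trans hG'H)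
      (Subgroup.commutator_le_self M) hHM le_rfl
  calc ⁅M, M⁆.relIndex M = ⁅M, M⁆.relIndex (commutator G) * (commutator G).relIndex M :=
        (Subgroup.relIndex_mul_relIndex _ _ _ hMG' hG'M).symm
    _ ≤ p * (commutator G).relIndex M := Nat.mul_le_mul_right _ hquot
    _ = (commutator G).index := by rw [← hM, mul_comm, Subgroup.relIndex_mul_index hG'M]

/-- Let `G` be a finite `p`-group of order at least `p^5` with `|G : G'| ≤ p^3`. If `H` is
a maximal subgroup of `G` having no irreducible complex character of degree `p`, then every
other maximal subgroup `M` of `G` satisfies `|M : M'| ≤ |G : G'|`. -/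
theorem stmt13 (p : ℕ) [Fact p.Prime] (G : Type) [Group G] [Finite G]
    (hG : IsPGroup p G) (hcard : p ^ 5 ≤ Nat.card G)
    (hidx : (commutator G).index ≤ p ^ 3)
    (H : Subgroup G) (hH : H.index = p)
    (hchar : ∀ (V : FDRep ℂ H), CategoryTheory.Simple V → Module.finrank ℂ V ≠ p) :
    ∀ M : Subgroup G, M.index = p → M ≠ H →
      (⁅M, M⁆ : Subgroup G).relIndex M ≤ (commutator G).index :=
  stmt13_general p G hG H hH hchar
end

section
/- Let G be a finite p-group of maximal class with |G| ≥ p^4 that has an irreducible complex character of degree greater than p. Then the subgroup G₁ = C_G(γ₂(G)/γ₄(G)) is nonabelian. -/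
/-!
If the major centralizer `C` were abelian, every irreducible complex representation `V` of `G`
would satisfy `dim V ≤ |G : C|`: an abelian subgroup has a common eigenvector `w` in `V`, and by
irreducibility the translates of `w` by a transversal of `C` span `V`. On the other hand, in a
group of maximal class the sections `γ₂/γ₃` and `γ₃/γ₄` have order `p`, so for `s ∈ γ₂ \ γ₃`
the map `g ↦ [s, g] γ₄` is a homomorphism `G → γ₃/γ₄` with kernel `C`, and `|G : C| ≤ p`.

Mathlib indexes the lower central series from `0`: `lowerCentralSeries ⊤ k` is `γ_{k+1}`.
-/

open Module CategoryTheory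
open scoped MonoidAlgebra IsMulCommutative commutatorElement

namespace Representation

variable {k G V : Type*} [Field k] [AddCommGroup V] [Module k V]

theorem exists_common_eigenvector [Monoid G] [IsMulCommutative G] [IsAlgClosed k]
    [FiniteDimensional k V] [Nontrivial V] (ρ : Representation k G V) :
    ∃ w : V, w ≠ 0 ∧ ∀ g, ρ g w ∈ k ∙ w := by
  have : IsArtinian k[G] ρ.asModule := isArtinian_of_tower k inferInstance
  have : Nontrivial ρ.asModule := inferInstanceAs (Nontrivial V)
  obtain ⟨N, hN⟩ := IsAtomic.exists_atom (Submodule k[G] ρ.asModule)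
  have : IsSimpleModule k[G] N := isSimpleModule_iff_isAtom.mpr hN
  have : FiniteDimensional k N := inferInstanceAs (FiniteDimensional k (N.restrictScalars k))
  have : Nontrivial N := IsSimpleModule.nontrivial k[G] N
  obtain ⟨w, hw⟩ := exists_ne (0 : N)
  have hline := (finrank_eq_one_iff_of_nonzero' w hw).mp
    (IsSimpleModule.finrank_eq_one_of_isMulCommutative k[G] N k)
  refine ⟨ρ.asModuleEquiv w, by simpa using hw, fun g => Submodule.mem_span_singleton.mpr ?_⟩
  obtain ⟨c, hc⟩ := hline ⟨MonoidAlgebra.single g 1 • (w : ρ.asModule), N.smul_mem _ w.2⟩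
  have := congrArg (fun x : N => ρ.asModuleEquiv (x : ρ.asModule)) hc
  simp only [asModuleEquiv_map_smul, asAlgebraHom_single, one_smul] at this
  exact ⟨c, this⟩

variable [Group G]

theorem IsIrreducible.finrank_le_index (ρ : Representation k G V) [ρ.IsIrreducible]
    (A : Subgroup G) [A.FiniteIndex] {w : V} (hw : w ≠ 0) (hA : ∀ a ∈ A, ρ a w ∈ k ∙ w) :
    finrank k V ≤ A.index := by
  let v : G ⧸ A → V := fun q => ρ q.out w
  have hv : ∀ g : G, ρ g w ∈ Submodule.span k (Set.range v) := by
    intro g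
    obtain ⟨a, ha⟩ := QuotientGroup.mk_out_eq_mul A g
    obtain ⟨c, hc⟩ := Submodule.mem_span_singleton.mp (hA _ (inv_mem a.2))
    have hg : g = (g : G ⧸ A).out * (a : G)⁻¹ := by rw [ha]; group
    rw [hg, map_mul, Module.End.mul_apply, ← hc, map_smul]
    exact Submodule.smul_mem _ _ (Submodule.subset_span ⟨_, rfl⟩)
  let U : Subrepresentation ρ :=
    { toSubmodule := Submodule.span k (Set.range v)
      apply_mem_toSubmodule g x hx := by
        refine Submodule.span_le (p := (Submodule.span k (Set.range v)).comap (ρ g)) |>.mpr ?_ hx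
        rintro _ ⟨q, rfl⟩
        simpa [v, ← Module.End.mul_apply, ← map_mul] using hv (g * q.out) }
  have hU : U.toSubmodule = ⊤ := by
    refine congrArg _ <| (IsSimpleOrder.eq_bot_or_eq_top U).resolve_left fun hbot => hw ?_
    have hspan : Submodule.span k (Set.range v) = ⊥ := congrArg Subrepresentation.toSubmodule hbot
    simpa [hspan] using hv 1
  calc finrank k V = (Set.range v).finrank k := by
        rw [Set.finrank, ← finrank_top k V]
        exact congrArg (fun W : Submodule k V => finrank k W) hU.symm
    _ ≤ Nat.card (G ⧸ A) := by
        have := Fintype.ofFinite (G ⧸ A)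
        simpa using finrank_range_le_card (R := k) v

theorem IsIrreducible.finrank_le_index_of_isMulCommutative [IsAlgClosed k] [FiniteDimensional k V]
    (ρ : Representation k G V) [ρ.IsIrreducible] (A : Subgroup G) [A.FiniteIndex]
    [IsMulCommutative A] : finrank k V ≤ A.index := by
  have : Nontrivial V := by
    obtain ⟨σ, τ, hne⟩ := exists_pair_ne (Subrepresentation ρ)
    by_contra h
    rw [not_nontrivial_iff_subsingleton] at h
    exact hne (Subrepresentation.ext (Subsingleton.elim _ _))
  obtain ⟨w, hw, hA⟩ := exists_common_eigenvector (ρ.comp A.subtype)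
  exact finrank_le_index ρ A hw fun a ha => hA ⟨a, ha⟩

end Representation

theorem FDRep.isIrreducible_of_simple {k G : Type*} [Field k] [Monoid G] (V : FDRep k G)
    [Simple V] : Representation.IsIrreducible V.ρ := by
  have : Nontrivial V := by
    by_contra h
    rw [not_nontrivial_iff_subsingleton] at h
    exact id_nonzero V (by ext x; exact Subsingleton.elim _ _)
  refine { exists_pair_ne := ⟨⊥, ⊤, fun h => ?_⟩, eq_bot_or_eq_top := fun σ => ?_ }
  · obtain ⟨v, hv⟩ := exists_ne (0 : V)
    have : (⊤ : Submodule k V) = ⊥ := congrArg Subrepresentation.toSubmodule h.symm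
    exact hv (by simpa [this] using (Submodule.mem_top : v ∈ (⊤ : Submodule k V)))
  let ι : FDRep.of σ.toRepresentation ⟶ V :=
    ⟨FGModuleCat.ofHom σ.toSubmodule.subtype, fun g => rfl⟩
  have : Mono ι := (forget (FDRep k G)).mono_of_mono_map
    ((mono_iff_injective _).mpr Subtype.val_injective)
  rcases eq_or_ne ι 0 with h0 | h0
  · refine Or.inl (Subrepresentation.ext ((Submodule.eq_bot_iff _).mpr fun x hx => ?_))
    exact ConcreteCategory.congr_hom h0 ⟨x, hx⟩
  · have := isIso_of_mono_of_nonzero h0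
    have hsurj := ((isIso_iff_bijective ((forget (FDRep k G)).map ι)).mp inferInstance).2
    refine Or.inr (Subrepresentation.ext (eq_top_iff.mpr fun v _ => ?_))
    obtain ⟨u, rfl⟩ := hsurj v
    exact u.2

section GroupTheory

open Subgroup

variable {G : Type*} [Group G]

theorem Subgroup.lowerCentralSeries_succ_lt [Group.IsNilpotent G] {k : ℕ}
    (hk : k < Group.nilpotencyClass G) :
    (⊤ : Subgroup G).lowerCentralSeries (k + 1) < (⊤ : Subgroup G).lowerCentralSeries k := by
  refine lt_of_le_of_ne (Subgroup.lowerCentralSeries_antitone _ k.le_succ) fun h => ?_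
  have hstable : ∀ m, (⊤ : Subgroup G).lowerCentralSeries (k + m) =
      (⊤ : Subgroup G).lowerCentralSeries k := by
    intro m
    induction m with
    | zero => rfl
    | succ m ih =>
      rw [← add_assoc, lowerCentralSeries_succ, ih, ← lowerCentralSeries_succ, h]
  have := hstable (Group.nilpotencyClass G)
  rw [lowerCentralSeries_eq_bot_iff_nilpotencyClass_le.mpr (by omega), eq_comm,
    lowerCentralSeries_eq_bot_iff_nilpotencyClass_le] at this
  omega

theorem IsPGroup.prime_le_relIndex {p : ℕ} [Fact p.Prime] [Finite G] (hG : IsPGroup p G)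
    {H K : Subgroup G} (hHK : H < K) : p ≤ H.relIndex K := by
  obtain ⟨m, hm⟩ := (hG.to_subgroup K).index (H.subgroupOf K)
  have hm0 : m ≠ 0 := by
    rintro rfl
    exact hHK.not_ge (relIndex_eq_one.mp hm)
  rw [relIndex, hm]
  exact Nat.le_self_pow hm0 p

theorem IsPGroup.pow_le_relIndex_lowerCentralSeries {p : ℕ} [Fact p.Prime] [Finite G]
    [Group.IsNilpotent G] (hG : IsPGroup p G) {i j : ℕ} (hij : i ≤ j)
    (hj : j ≤ Group.nilpotencyClass G) :
    p ^ (j - i) ≤ ((⊤ : Subgroup G).lowerCentralSeries j).relIndex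
      ((⊤ : Subgroup G).lowerCentralSeries i) := by
  induction j, hij using Nat.le_induction with
  | base => simp
  | succ j hij ih =>
    rw [← relIndex_mul_relIndex _ _ _ (Subgroup.lowerCentralSeries_antitone _ j.le_succ)
      (Subgroup.lowerCentralSeries_antitone _ hij), Nat.sub_add_comm hij, pow_succ']
    exact Nat.mul_le_mul (hG.prime_le_relIndex (lowerCentralSeries_succ_lt hj))
      (ih (by omega))

theorem Subgroup.top_lowerCentralSeries_one_le_two_of_isCyclic
    [IsCyclic (G ⧸ (⊤ : Subgroup G).lowerCentralSeries 1)] :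
    (⊤ : Subgroup G).lowerCentralSeries 1 ≤ (⊤ : Subgroup G).lowerCentralSeries 2 := by
  let f := QuotientGroup.map _ _ (MonoidHom.id G)
    (Subgroup.lowerCentralSeries_antitone ⊤ one_le_two)
  have hf : f.ker ≤ center (G ⧸ (⊤ : Subgroup G).lowerCentralSeries 2) := by
    intro x hx
    induction x using QuotientGroup.induction_on with | H g => ?_
    have hg : g ∈ (⊤ : Subgroup G).lowerCentralSeries 1 := (QuotientGroup.eq_one_iff g).mp hx
    refine mem_center_iff.mpr fun y => ?_
    induction y using QuotientGroup.induction_on with | H h => ?_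
    refine QuotientGroup.eq.mpr ?_
    rw [show (h * g)⁻¹ * (g * h) = ⁅g⁻¹, h⁻¹⁆ by group]
    exact commutator_mem_commutator (inv_mem hg) (mem_top _)
  exact Normal.quotient_commutative_iff_commutator_le.mp
    (f.isMulCommutative_of_isCyclic_of_ker_le_center hf)

theorem IsPGroup.sq_le_index_lowerCentralSeries_one {p : ℕ} [hp : Fact p.Prime] [Finite G]
    [Group.IsNilpotent G] (hG : IsPGroup p G) (hc : 2 ≤ Group.nilpotencyClass G) :
    p ^ 2 ≤ ((⊤ : Subgroup G).lowerCentralSeries 1).index := by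
  obtain ⟨m, hm⟩ := hG.index ((⊤ : Subgroup G).lowerCentralSeries 1)
  have hm0 : m ≠ 0 := by
    rintro rfl
    exact (lowerCentralSeries_succ_lt (G := G) (k := 0) (by omega)).ne
      (index_eq_one.mp hm)
  have hm1 : m ≠ 1 := by
    rintro rfl
    have : IsCyclic (G ⧸ (⊤ : Subgroup G).lowerCentralSeries 1) :=
      isCyclic_of_prime_card (p := p) (by rw [← Subgroup.index, hm, pow_one])
    exact (lowerCentralSeries_succ_lt (G := G) (k := 1) (by omega)).not_ge
      top_lowerCentralSeries_one_le_two_of_isCyclic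
  rw [hm]
  exact Nat.pow_le_pow_right hp.out.pos (by omega)

theorem relIndex_lowerCentralSeries_succ_eq_of_nilpotencyClass_eq {p n : ℕ} [hp : Fact p.Prime]
    [Finite G] [Group.IsNilpotent G] (hcard : Nat.card G = p ^ n)
    (hmax : Group.nilpotencyClass G = n - 1) {k : ℕ} (hk : 1 ≤ k) (hkn : k + 2 ≤ n) :
    ((⊤ : Subgroup G).lowerCentralSeries (k + 1)).relIndex
      ((⊤ : Subgroup G).lowerCentralSeries k) = p := by
  have hG : IsPGroup p G := IsPGroup.of_card hcard
  set γ := (⊤ : Subgroup G).lowerCentralSeries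
  set c := Group.nilpotencyClass G
  set x := (γ (k + 1)).relIndex (γ k)
  have hprod :
      (γ c).relIndex (γ (k + 1)) * (x * ((γ k).relIndex (γ 1) * (γ 1).index)) = p ^ n := by
    have hanti := Subgroup.lowerCentralSeries_antitone (⊤ : Subgroup G)
    rw [← relIndex_top_right, relIndex_mul_relIndex _ _ ⊤ (hanti hk) le_top,
      relIndex_mul_relIndex _ _ ⊤ (hanti k.le_succ) (hanti (Nat.zero_le k)),
      relIndex_mul_relIndex _ _ ⊤ (hanti (by omega)) (hanti (Nat.zero_le _)),
      Subgroup.lowerCentralSeries_nilpotencyClass, relIndex_bot_left, card_top, hcard]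
  have hle : x * p ^ (n - 1) ≤ p * p ^ (n - 1) := by
    calc x * p ^ (n - 1) = p ^ (c - (k + 1)) * (x * (p ^ (k - 1) * p ^ 2)) := by
          rw [← pow_add, mul_left_comm, ← pow_add]
          congr 2
          omega
      _ ≤ (γ c).relIndex (γ (k + 1)) * (x * ((γ k).relIndex (γ 1) * (γ 1).index)) := by
          gcongr
          · exact hG.pow_le_relIndex_lowerCentralSeries (by omega) le_rfl
          · exact hG.pow_le_relIndex_lowerCentralSeries hk (by omega)
          · exact hG.sq_le_index_lowerCentralSeries_one (by omega)
      _ = p * p ^ (n - 1) := by rw [hprod, ← pow_succ']; congr 1; omega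
  exact le_antisymm (Nat.le_of_mul_le_mul_right hle (pow_pos hp.out.pos _))
    (hG.prime_le_relIndex (lowerCentralSeries_succ_lt (by omega)))

theorem Subgroup.index_le_relIndex_of_mem_iff_commutatorElement_mem [Finite G]
    {M N : Subgroup G} [M.Normal] (hNM : ⁅N, ⊤⁆ ≤ M) {s : G} (hs : ∀ g, ⁅s, g⁆ ∈ N)
    {H : Subgroup G} (hH : ∀ g, g ∈ H ↔ ⁅s, g⁆ ∈ M) : H.index ≤ M.relIndex N := by
  let f : G →* N ⧸ M.subgroupOf N :=
    { toFun g := (⟨⁅s, g⁆, hs g⟩ : N)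
      map_one' := (QuotientGroup.eq_one_iff _).mpr <| by
        simp [mem_subgroupOf]
      map_mul' g h := by
        rw [← QuotientGroup.mk_mul, QuotientGroup.eq, mem_subgroupOf]
        change ⁅s, g * h⁆⁻¹ * (⁅s, g⁆ * ⁅s, h⁆) ∈ M
        rw [show ⁅s, g * h⁆⁻¹ * (⁅s, g⁆ * ⁅s, h⁆) = ⁅⁅s, h⁆⁻¹, g⁆⁻¹ by group]
        exact inv_mem (hNM (commutator_mem_commutator (inv_mem (hs h)) (mem_top g))) }
  have hker : f.ker = H := by
    ext g
    rw [MonoidHom.mem_ker, hH]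
    exact (QuotientGroup.eq_one_iff _).trans mem_subgroupOf
  rw [← hker, index_ker]
  exact card_le_card_group f.range

theorem Subgroup.le_of_relIndex_prime {H K L : Subgroup G} (hHK : H ≤ K)
    (hp : (H.relIndex K).Prime) {s : G} (hsK : s ∈ K) (hsH : s ∉ H) (hHL : H ≤ L)
    (hsL : s ∈ L) : K ≤ L := by
  rw [← relIndex_mul_relIndex H (L ⊓ K) K (le_inf hHL hHK) inf_le_right] at hp
  have hne : H.relIndex (L ⊓ K) ≠ 1 := fun h => hsH (relIndex_eq_one.mp h ⟨hsL, hsK⟩)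
  have hone : (L ⊓ K).relIndex K = 1 := by
    rcases Nat.prime_mul_iff.mp hp with ⟨-, h⟩ | ⟨-, h⟩
    · exact h
    · exact absurd h hne
  exact (relIndex_eq_one.mp hone).trans inf_le_left

theorem Subgroup.mem_comap_centralizer_singleton_iff (M : Subgroup G) [M.Normal] (g x : G) :
    x ∈ (centralizer {(g : G ⧸ M)}).comap (QuotientGroup.mk' M) ↔ ⁅g, x⁆ ∈ M := by
  rw [mem_comap, mem_centralizer_singleton_iff, eq_comm, ← commutatorElement_eq_one_iff_mul_comm,
    ← QuotientGroup.mk'_apply, ← map_commutatorElement, QuotientGroup.mk'_apply,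
    QuotientGroup.eq_one_iff]

theorem index_le_of_nilpotencyClass_eq {p n : ℕ} [hp : Fact p.Prime] [Finite G]
    [Group.IsNilpotent G] (hcard : Nat.card G = p ^ n) (hn : 4 ≤ n)
    (hmax : Group.nilpotencyClass G = n - 1) (C : Subgroup G)
    (hC : ∀ g : G, g ∈ C ↔
      ∀ x ∈ commutator G, ⁅g, x⁆ ∈ (⊤ : Subgroup G).lowerCentralSeries 3) :
    C.index ≤ p := by
  set γ := (⊤ : Subgroup G).lowerCentralSeries
  have hγ₂ : (γ 2).relIndex (γ 1) = p :=
    relIndex_lowerCentralSeries_succ_eq_of_nilpotencyClass_eq hcard hmax le_rfl (by omega)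
  have hγ₃ : (γ 3).relIndex (γ 2) = p :=
    relIndex_lowerCentralSeries_succ_eq_of_nilpotencyClass_eq hcard hmax one_le_two (by omega)
  obtain ⟨s, hs₁, hs₂⟩ : ∃ s ∈ γ 1, s ∉ γ 2 :=
    SetLike.exists_of_lt (lowerCentralSeries_succ_lt (by omega))
  have hmem : ∀ g, g ∈ C ↔ ⁅s, g⁆ ∈ γ 3 := by
    intro g
    rw [hC, ← commutatorElement_inv, inv_mem_iff]
    refine ⟨fun h => h s hs₁, fun h x hx => ?_⟩
    have hγ : γ 1 ≤ (centralizer {(g : G ⧸ γ 3)}).comap (QuotientGroup.mk' (γ 3)) := by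
      refine le_of_relIndex_prime (Subgroup.lowerCentralSeries_antitone _ one_le_two)
        (hγ₂ ▸ hp.out) hs₁ hs₂ (fun y hy => ?_)
        ((mem_comap_centralizer_singleton_iff _ g s).mpr h)
      rw [mem_comap_centralizer_singleton_iff, show γ 3 = ⁅γ 2, ⊤⁆ from rfl, commutator_comm]
      exact commutator_mem_commutator (mem_top g) hy
    exact (mem_comap_centralizer_singleton_iff _ g x).mp (hγ hx)
  calc C.index ≤ (γ 3).relIndex (γ 2) :=
        index_le_relIndex_of_mem_iff_commutatorElement_mem le_rfl
          (fun g => commutator_mem_commutator hs₁ (mem_top g)) hmem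
    _ = p := hγ₃

end GroupTheory

open scoped commutatorElement in
/-- Let `G` be a finite `p`-group of maximal class with `|G| = p^n ≥ p^4`, having an
irreducible complex character of degree greater than `p`. Then the major centralizer
`G₁ = C_G(γ₂(G)/γ₄(G))` is nonabelian. -/
theorem stmt19 (p n : ℕ) [Fact p.Prime] (G : Type) [Group G] [Finite G]
    (hG : IsPGroup p G) (hcard : Nat.card G = p ^ n) (hn : 4 ≤ n)
    (hmax : Group.nilpotencyClass G = n - 1)
    (hchar : ∃ (V : FDRep ℂ G), CategoryTheory.Simple V ∧ p < Module.finrank ℂ V)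
    (C : Subgroup G)
    (hC : ∀ g : G, g ∈ C ↔ ∀ x ∈ commutator G, ⁅g, x⁆ ∈ (⊤ : Subgroup G).lowerCentralSeries 3) :
    ¬ IsMulCommutative C := by
  intro hC_abelian
  have := hG.isNilpotent
  obtain ⟨V, hV, hdim⟩ := hchar
  have := FDRep.isIrreducible_of_simple V
  have hdim_le := Representation.IsIrreducible.finrank_le_index_of_isMulCommutative V.ρ C
  have hindex := index_le_of_nilpotencyClass_eq hcard hn hmax C hC
  omega
end
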